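/- arXiv:2406.19617 — 6 statements merged into one kernel-verified Lean document; each statement's English description precedes it below -/
import Mathlib

section
/- If z_1,...,z_k are independent real-valued random variables such that P[|z_j| ≥ K] ≤ 2·exp(−K/σ_j) for all K ≥ 0 and each j, then P[|∑_{j=1}^k z_j| ≥ K] ≤ 2·exp(−K/(3·∑_{j=1}^k σ_j)) for all K ≥ 0. -/
/-!
Chernoff's bound applied to `∑ j, |z j|` at `t = 1 / (3 ∑ j, σ j)`. By the layer-cake formula
and the tail bound,
`E[exp (t |z j|)] ≤ 1 + ∫₀^∞ 2 t e^{-(1/σ_j - t) s} ds = (1 + tσ_j) / (1 - tσ_j)`.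
The map `f a = (1 + a) / (1 - a)` satisfies `f a * f b ≤ f (a + b)` on `[0, 1)`, so by independence
the mgf of `∑ j, |z j|` at `t` is at most `f (∑ j, t σ_j) = f (1/3) = 2`.
-/

open MeasureTheory ProbabilityTheory Real Set

lemma one_add_div_one_sub_mul_le {a b : ℝ} (ha : 0 ≤ a) (hb : 0 ≤ b) (hab : a + b < 1) :
    (1 + a) / (1 - a) * ((1 + b) / (1 - b)) ≤ (1 + (a + b)) / (1 - (a + b)) := by
  rw [div_mul_div_comm, div_le_div_iff₀ (by nlinarith) (by linarith)]
  nlinarith [mul_nonneg (mul_nonneg ha hb) (add_nonneg ha hb)]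

lemma prod_one_add_div_one_sub_le {ι : Type*} (s : Finset ι) {a : ι → ℝ}
    (ha : ∀ j ∈ s, 0 ≤ a j) (hs : ∑ j ∈ s, a j < 1) :
    ∏ j ∈ s, (1 + a j) / (1 - a j) ≤ (1 + ∑ j ∈ s, a j) / (1 - ∑ j ∈ s, a j) := by
  classical
  induction s using Finset.induction_on with
  | empty => simp
  | insert i s hi ih =>
    rw [Finset.forall_mem_insert] at ha
    rw [Finset.sum_insert hi] at hs ⊢
    rw [Finset.prod_insert hi]
    have hs_nonneg : 0 ≤ ∑ j ∈ s, a j := Finset.sum_nonneg ha.2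
    calc (1 + a i) / (1 - a i) * ∏ j ∈ s, (1 + a j) / (1 - a j)
        ≤ (1 + a i) / (1 - a i) * ((1 + ∑ j ∈ s, a j) / (1 - ∑ j ∈ s, a j)) := by
          gcongr
          · exact div_nonneg (by linarith) (by linarith)
          · exact ih ha.2 (by linarith)
      _ ≤ (1 + (a i + ∑ j ∈ s, a j)) / (1 - (a i + ∑ j ∈ s, a j)) :=
          one_add_div_one_sub_mul_le ha.1 hs_nonneg hs

lemma intervalIntegral_mul_exp_mul (t w : ℝ) :
    ∫ s in (0 : ℝ)..w, t * exp (t * s) = exp (t * w) - 1 := by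
  rw [intervalIntegral.integral_const_mul, intervalIntegral.mul_integral_comp_mul_left,
    integral_exp, mul_zero, exp_zero]

lemma lintegral_exp_mul_Ioi {a : ℝ} (ha : a < 0) :
    ∫⁻ s in Ioi (0 : ℝ), ENNReal.ofReal (exp (a * s)) = ENNReal.ofReal (-a⁻¹) := by
  rw [← ofReal_integral_eq_lintegral_ofReal (integrableOn_exp_mul_Ioi ha 0)
    (ae_of_all _ fun s => (exp_pos _).le), integral_exp_mul_Ioi ha, mul_zero, exp_zero,
    neg_div, one_div]

section Mgf

variable {Ω : Type*} [MeasurableSpace Ω] {μ : Measure Ω} {W : Ω → ℝ} {t : ℝ}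

lemma lintegral_exp_mul_eq_one_add_lintegral_meas_le [IsProbabilityMeasure μ]
    (hW : AEMeasurable W μ) (hW_nonneg : 0 ≤ᵐ[μ] W) (ht : 0 ≤ t) :
    ∫⁻ ω, ENNReal.ofReal (exp (t * W ω)) ∂μ =
      1 + ∫⁻ s in Ioi 0, μ {ω | s ≤ W ω} * ENNReal.ofReal (t * exp (t * s)) := by
  have hcont : Continuous fun s => t * exp (t * s) := by fun_prop
  rw [← lintegral_comp_eq_lintegral_meas_le_mul μ hW_nonneg hW
    (fun _ _ => hcont.intervalIntegrable _ _) (ae_of_all _ fun _ => by positivity)]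
  simp_rw [intervalIntegral_mul_exp_mul]
  rw [← measure_univ (μ := μ), ← lintegral_one, ← lintegral_add_left measurable_const]
  refine lintegral_congr_ae (hW_nonneg.mono fun ω hω => ?_)
  have hexp : 1 ≤ exp (t * W ω) := one_le_exp (mul_nonneg ht hω)
  dsimp only
  rw [← ENNReal.ofReal_one, ← ENNReal.ofReal_add zero_le_one (by linarith), add_sub_cancel]

lemma lintegral_exp_mul_le_of_tail [IsProbabilityMeasure μ] (hW : AEMeasurable W μ)
    (hW_nonneg : 0 ≤ᵐ[μ] W) {σ : ℝ} (hσ : 0 < σ) (ht : 0 ≤ t) (htσ : t * σ < 1)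
    (htail : ∀ K : ℝ, 0 ≤ K → μ {ω | K ≤ W ω} ≤ ENNReal.ofReal (2 * exp (-(K / σ)))) :
    ∫⁻ ω, ENNReal.ofReal (exp (t * W ω)) ∂μ ≤ ENNReal.ofReal ((1 + t * σ) / (1 - t * σ)) := by
  have hσt : 0 < 1 - t * σ := by linarith
  have ha : t - σ⁻¹ < 0 := by rwa [sub_neg, ← one_div, lt_div_iff₀ hσ]
  have hpoint : ∀ s ∈ Ioi (0 : ℝ), μ {ω | s ≤ W ω} * ENNReal.ofReal (t * exp (t * s)) ≤
      ENNReal.ofReal (2 * t) * ENNReal.ofReal (exp ((t - σ⁻¹) * s)) := fun s hs => by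
    grw [htail s (le_of_lt hs), ← ENNReal.ofReal_mul (by positivity),
      ← ENNReal.ofReal_mul (by positivity), show (t - σ⁻¹) * s = -(s / σ) + t * s by ring, exp_add]
    exact le_of_eq (congrArg _ (by ring))
  rw [lintegral_exp_mul_eq_one_add_lintegral_meas_le hW hW_nonneg ht]
  calc 1 + ∫⁻ s in Ioi 0, μ {ω | s ≤ W ω} * ENNReal.ofReal (t * exp (t * s))
      ≤ 1 + ∫⁻ s in Ioi 0, ENNReal.ofReal (2 * t) * ENNReal.ofReal (exp ((t - σ⁻¹) * s)) := by
        gcongr 1 + ?_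
        exact setLIntegral_mono' measurableSet_Ioi hpoint
    _ = ENNReal.ofReal (1 + 2 * t * -(t - σ⁻¹)⁻¹) := by
        rw [lintegral_const_mul' _ _ ENNReal.ofReal_ne_top, lintegral_exp_mul_Ioi ha,
          ← ENNReal.ofReal_mul (by positivity), ← ENNReal.ofReal_one,
          ← ENNReal.ofReal_add zero_le_one (mul_nonneg (by positivity) (by simp [ha.le]))]
    _ = ENNReal.ofReal ((1 + t * σ) / (1 - t * σ)) := by
        congr 1
        rw [show t - σ⁻¹ = -((1 - t * σ) / σ) by field_simp; ring, inv_neg, neg_neg, inv_div]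
        field_simp
        ring

lemma integrable_exp_mul_of_tail [IsProbabilityMeasure μ] (hW : AEMeasurable W μ)
    (hW_nonneg : 0 ≤ᵐ[μ] W) {σ : ℝ} (hσ : 0 < σ) (ht : 0 ≤ t) (htσ : t * σ < 1)
    (htail : ∀ K : ℝ, 0 ≤ K → μ {ω | K ≤ W ω} ≤ ENNReal.ofReal (2 * exp (-(K / σ)))) :
    Integrable (fun ω => exp (t * W ω)) μ := by
  refine ⟨(hW.const_mul t).exp.aestronglyMeasurable, ?_⟩
  rw [hasFiniteIntegral_iff_ofReal (ae_of_all _ fun _ => (exp_pos _).le)]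
  exact (lintegral_exp_mul_le_of_tail hW hW_nonneg hσ ht htσ htail).trans_lt ENNReal.ofReal_lt_top

lemma mgf_le_of_tail [IsProbabilityMeasure μ] (hW : AEMeasurable W μ)
    (hW_nonneg : 0 ≤ᵐ[μ] W) {σ : ℝ} (hσ : 0 < σ) (ht : 0 ≤ t) (htσ : t * σ < 1)
    (htail : ∀ K : ℝ, 0 ≤ K → μ {ω | K ≤ W ω} ≤ ENNReal.ofReal (2 * exp (-(K / σ)))) :
    mgf W μ t ≤ (1 + t * σ) / (1 - t * σ) := by
  rw [mgf, integral_eq_lintegral_of_nonneg_ae (ae_of_all _ fun _ => (exp_pos _).le)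
    (hW.const_mul t).exp.aestronglyMeasurable]
  exact ENNReal.toReal_le_of_le_ofReal
    (div_nonneg (by linarith [mul_nonneg ht hσ.le]) (by linarith))
    (lintegral_exp_mul_le_of_tail hW hW_nonneg hσ ht htσ htail)

end Mgf

lemma ProbabilityTheory.iIndepFun.measureReal_abs_sum_ge_le_exp_mul_prod_mgf {Ω ι : Type*}
    [MeasurableSpace Ω] {μ : Measure Ω} [Fintype ι] {z : ι → Ω → ℝ}
    (hindep : iIndepFun z μ) (hmeas : ∀ j, Measurable (z j))
    {t : ℝ} (ht : 0 ≤ t) (hint : ∀ j, Integrable (fun ω => exp (t * |z j ω|)) μ) (K : ℝ) :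
    μ.real {ω | K ≤ |∑ j, z j ω|} ≤ exp (-t * K) * ∏ j, mgf (fun ω => |z j ω|) μ t := by
  have := hindep.isProbabilityMeasure
  have habs : iIndepFun (fun j ω => |z j ω|) μ :=
    hindep.comp (fun _ => abs) fun _ => measurable_abs
  have habs_meas : ∀ j, Measurable fun ω => |z j ω| := fun j => (hmeas j).abs
  calc μ.real {ω | K ≤ |∑ j, z j ω|}
      ≤ μ.real {ω | K ≤ (∑ j, fun ω => |z j ω|) ω} := by
        refine measureReal_mono fun ω (hω : K ≤ _) => ?_
        rw [mem_ofPred_eq, Finset.sum_apply]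
        exact hω.trans (Finset.abs_sum_le_sum_abs _ _)
    _ ≤ exp (-t * K) * mgf (∑ j, fun ω => |z j ω|) μ t :=
        measure_ge_le_exp_mul_mgf K ht (habs.integrable_exp_mul_sum habs_meas fun j _ => hint j)
    _ = exp (-t * K) * ∏ j, mgf (fun ω => |z j ω|) μ t := by rw [habs.mgf_sum habs_meas]

/-- If `z 1, ..., z k` are independent real-valued random variables such that
`P[|z j| ≥ K] ≤ 2 exp (−K/σ_j)` for all `K ≥ 0`, then
`P[|∑ j, z j| ≥ K] ≤ 2 exp (−K/(3 ∑ j σ_j))` for all `K ≥ 0`. -/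
theorem stmt_1
    {Ω : Type*} [MeasurableSpace Ω] (μ : Measure Ω) [IsProbabilityMeasure μ]
    (k : ℕ) (z : Fin k → Ω → ℝ) (σ : Fin k → ℝ)
    (hσ : ∀ j, 0 < σ j)
    (hmeas : ∀ j, Measurable (z j))
    (hindep : iIndepFun z μ)
    (htail : ∀ j, ∀ K : ℝ, 0 ≤ K →
      μ {ω | K ≤ |z j ω|} ≤ ENNReal.ofReal (2 * Real.exp (-(K / σ j)))) :
    ∀ K : ℝ, 0 ≤ K →
      μ {ω | K ≤ |∑ j, z j ω|} ≤
        ENNReal.ofReal (2 * Real.exp (-(K / (3 * ∑ j, σ j)))) := by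
  intro K _
  obtain hS | hS := (Finset.sum_nonneg fun j _ => (hσ j).le : 0 ≤ ∑ j, σ j).eq_or_lt
  · rw [← hS, mul_zero, div_zero, neg_zero, exp_zero, mul_one]
    exact prob_le_one.trans (by norm_num)
  set t := (3 * ∑ j, σ j)⁻¹ with ht_def
  have ht : 0 < t := by positivity
  have htσ_nonneg : ∀ j, 0 ≤ t * σ j := fun j => mul_nonneg ht.le (hσ j).le
  have htσ_sum : ∑ j, t * σ j = 1 / 3 := by
    rw [← Finset.mul_sum, ht_def, mul_inv, mul_assoc, inv_mul_cancel₀ hS.ne', mul_one, one_div]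
  have htσ : ∀ j, t * σ j < 1 := fun j =>
    (Finset.single_le_sum (fun i _ => htσ_nonneg i) (Finset.mem_univ j)).trans_lt
      (by rw [htσ_sum]; norm_num)
  have hprod : ∏ j, mgf (fun ω => |z j ω|) μ t ≤ 2 :=
    calc ∏ j, mgf (fun ω => |z j ω|) μ t
        ≤ ∏ j, (1 + t * σ j) / (1 - t * σ j) :=
          Finset.prod_le_prod (fun j _ => mgf_nonneg) fun j _ =>
            mgf_le_of_tail (hmeas j).abs.aemeasurable (ae_of_all _ fun _ => abs_nonneg _)
              (hσ j) ht.le (htσ j) (htail j)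
      _ ≤ (1 + ∑ j, t * σ j) / (1 - ∑ j, t * σ j) :=
          prod_one_add_div_one_sub_le _ (fun j _ => htσ_nonneg j) (by rw [htσ_sum]; norm_num)
      _ = 2 := by rw [htσ_sum]; norm_num
  have hchernoff := hindep.measureReal_abs_sum_ge_le_exp_mul_prod_mgf hmeas ht.le
    (fun j => integrable_exp_mul_of_tail (hmeas j).abs.aemeasurable
      (ae_of_all _ fun _ => abs_nonneg _) (hσ j) ht.le (htσ j) (htail j)) K
  rw [← ofReal_measureReal]
  refine ENNReal.ofReal_le_ofReal (hchernoff.trans ?_)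
  calc exp (-t * K) * ∏ j, mgf (fun ω => |z j ω|) μ t ≤ exp (-t * K) * 2 := by gcongr
    _ = 2 * exp (-(K / (3 * ∑ j, σ j))) := by rw [mul_comm, neg_mul, inv_mul_eq_div]
end

section
/- Let H and Ĥ be symmetric positive definite d×d matrices with λ_min(Ĥ) ≥ M > 0. Then the spectral norm of H^{1/2}(H^{−1} − Ĥ^{−1})H^{1/2} is at most ‖H − Ĥ‖_F / M. -/
/-!
Put `c = ‖H - Ĥ‖_F / M`. The Frobenius norm bounds the quadratic form of `H - Ĥ`, so together
with `λ_min(Ĥ) ≥ M` we get `|wᵀ(H - Ĥ)w| ≤ c wᵀĤw`, i.e. `(1 - c)Ĥ ≤ H ≤ (1 + c)Ĥ` in the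
Loewner order. Inversion reverses that order, because `vᵀA⁻¹v = max_w (2vᵀw - wᵀAw)`; hence
`(1 - c)H⁻¹ ≤ Ĥ⁻¹ ≤ (1 + c)H⁻¹` (the left inequality is trivial when `c ≥ 1`). Conjugating by
`T = H^{1/2}`, which turns `H⁻¹` into the identity, gives `-c ≤ T(H⁻¹ - Ĥ⁻¹)T ≤ c`.
-/

open Matrix

/-- Frobenius norm of a real matrix. -/
noncomputable def frobM {d : ℕ} (A : Matrix (Fin d) (Fin d) ℝ) : ℝ :=
  Real.sqrt (∑ i, ∑ j, (A i j) ^ 2)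

theorem abs_dotProduct_mulVec_le_frobM {d : ℕ} (A : Matrix (Fin d) (Fin d) ℝ) (w : Fin d → ℝ) :
    |w ⬝ᵥ A *ᵥ w| ≤ frobM A * (w ⬝ᵥ w) := by
  have hquad : w ⬝ᵥ A *ᵥ w = ∑ p : Fin d × Fin d, A p.1 p.2 * (w p.1 * w p.2) := by
    simp only [Fintype.sum_prod_type, dotProduct, mulVec, Finset.mul_sum]
    exact Finset.sum_congr rfl fun i _ => Finset.sum_congr rfl fun j _ => by ring
  have hsq : ∑ p : Fin d × Fin d, (w p.1 * w p.2) ^ 2 = (w ⬝ᵥ w) ^ 2 := by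
    simp only [Fintype.sum_prod_type, dotProduct, sq, Finset.sum_mul_sum]
    exact Finset.sum_congr rfl fun i _ => Finset.sum_congr rfl fun j _ => by ring
  have hcs := Finset.sum_mul_sq_le_sq_mul_sq Finset.univ
    (fun p : Fin d × Fin d => A p.1 p.2) (fun p => w p.1 * w p.2)
  rw [hsq] at hcs
  have hfrob : 0 ≤ ∑ p : Fin d × Fin d, A p.1 p.2 ^ 2 := by positivity
  calc |w ⬝ᵥ A *ᵥ w| ≤ √((∑ p : Fin d × Fin d, A p.1 p.2 ^ 2) * (w ⬝ᵥ w) ^ 2) := by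
        rw [hquad]; exact Real.abs_le_sqrt hcs
    _ = frobM A * (w ⬝ᵥ w) := by
        rw [Real.sqrt_mul hfrob, Real.sqrt_sq (by simpa using dotProduct_self_star_nonneg w),
          frobM, Fintype.sum_prod_type]

section PosDef

variable {n : Type*} [Fintype n] [DecidableEq n]

theorem Matrix.PosDef.two_mul_dotProduct_sub_le {A : Matrix n n ℝ} (hA : A.PosDef)
    (v w : n → ℝ) : 2 * (v ⬝ᵥ w) - w ⬝ᵥ A *ᵥ w ≤ v ⬝ᵥ A⁻¹ *ᵥ v := by
  set u := A⁻¹ *ᵥ v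
  have hAu : A *ᵥ u = v := by
    simp [u, mulVec_mulVec, mul_nonsing_inv _ ((isUnit_iff_isUnit_det A).mp hA.isUnit)]
  have hsymm : Aᵀ = A := (isHermitian_iff_isSymm.mp hA.isHermitian).eq
  have hcross : u ⬝ᵥ A *ᵥ w = v ⬝ᵥ w := by
    rw [← hsymm, dotProduct_transpose_mulVec, hAu, dotProduct_comm]
  have hnonneg := hA.posSemidef.dotProduct_mulVec_nonneg (w - u)
  simp only [star_trivial, mulVec_sub, sub_dotProduct, dotProduct_sub, hAu, hcross] at hnonneg
  rw [dotProduct_comm w v, dotProduct_comm u v] at hnonneg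
  linarith

theorem Matrix.PosDef.mul_dotProduct_inv_mulVec_le {A B : Matrix n n ℝ} (hA : A.PosDef)
    (hB : IsUnit B.det) {t : ℝ} (ht : 0 ≤ t) (h : ∀ w, t * (w ⬝ᵥ A *ᵥ w) ≤ w ⬝ᵥ B *ᵥ w)
    (v : n → ℝ) : t * (v ⬝ᵥ B⁻¹ *ᵥ v) ≤ v ⬝ᵥ A⁻¹ *ᵥ v := by
  set u := B⁻¹ *ᵥ v
  have hBu : B *ᵥ u = v := by simp [u, mulVec_mulVec, mul_nonsing_inv _ hB]
  -- the variational bound for `A⁻¹`, tested at `w = t • B⁻¹ v`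
  have hvar := hA.two_mul_dotProduct_sub_le v (t • u)
  simp only [dotProduct_smul, smul_dotProduct, mulVec_smul, smul_eq_mul] at hvar
  have hu := h u
  rw [hBu, dotProduct_comm u v] at hu
  linarith [mul_le_mul_of_nonneg_left hu ht]

theorem Matrix.PosDef.abs_dotProduct_inv_mulVec_sub_le {A B : Matrix n n ℝ} (hA : A.PosDef)
    (hB : B.PosDef) {c : ℝ} (hc : 0 ≤ c)
    (h : ∀ w, |w ⬝ᵥ (A - B) *ᵥ w| ≤ c * (w ⬝ᵥ B *ᵥ w)) (x : n → ℝ) :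
    |x ⬝ᵥ A⁻¹ *ᵥ x - x ⬝ᵥ B⁻¹ *ᵥ x| ≤ c * (x ⬝ᵥ A⁻¹ *ᵥ x) := by
  have hdiff w : -(c * (w ⬝ᵥ B *ᵥ w)) ≤ w ⬝ᵥ A *ᵥ w - w ⬝ᵥ B *ᵥ w ∧
      w ⬝ᵥ A *ᵥ w - w ⬝ᵥ B *ᵥ w ≤ c * (w ⬝ᵥ B *ᵥ w) := by
    simpa only [sub_mulVec, dotProduct_sub] using abs_le.mp (h w)
  have hc₁ : (0 : ℝ) < 1 + c := by linarith
  rw [abs_le]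
  constructor
  · have hupper := hA.mul_dotProduct_inv_mulVec_le ((isUnit_iff_isUnit_det B).mp hB.isUnit)
      (inv_nonneg.mpr hc₁.le)
      (fun w => by rw [inv_mul_le_iff₀ hc₁]; linarith [(hdiff w).2]) x
    rw [inv_mul_le_iff₀ hc₁] at hupper
    linarith
  · rcases le_or_gt 1 c with hc1 | hc1
    · have hA' := hA.inv.posSemidef.dotProduct_mulVec_nonneg x
      have hB' := hB.inv.posSemidef.dotProduct_mulVec_nonneg x
      simp only [star_trivial] at hA' hB'
      linarith [mul_nonpos_of_nonpos_of_nonneg (sub_nonpos.mpr hc1) hA']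
    · have hlower := hB.mul_dotProduct_inv_mulVec_le ((isUnit_iff_isUnit_det A).mp hA.isUnit)
        (sub_nonneg.mpr hc1.le) (fun w => by linarith [(hdiff w).1]) x
      linarith

end PosDef

/-- Let `H, Ĥ` be symmetric positive definite with all eigenvalues of `Ĥ` at least `M > 0`,
and let `T = H^{1/2}` be the positive definite square root of `H`.  Then the spectral norm
of `T (H⁻¹ − Ĥ⁻¹) T = H^{1/2}(H^{−1} − Ĥ^{−1})H^{1/2}` is at most `‖H − Ĥ‖_F / M`;
since this matrix is symmetric, the spectral norm bound is expressed via the quadratic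
form: `|vᵀ (T (H⁻¹ − Ĥ⁻¹) T) v| ≤ (‖H − Ĥ‖_F / M) (vᵀv)` for all `v`. -/
theorem stmt_12 {d : ℕ} (M : ℝ) (hM : 0 < M)
    (H Hhat T : Matrix (Fin d) (Fin d) ℝ)
    (hH : H.PosDef) (hHhat : Hhat.PosDef) (hT : T.PosDef)
    (hEig : ∀ v : Fin d → ℝ, M * (v ⬝ᵥ v) ≤ v ⬝ᵥ Hhat.mulVec v)
    (hTsq : T * T = H) :
    ∀ v : Fin d → ℝ,
      |v ⬝ᵥ (T * (H⁻¹ - Hhat⁻¹) * T).mulVec v| ≤ (frobM (H - Hhat) / M) * (v ⬝ᵥ v) := by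
  intro v
  set c := frobM (H - Hhat) / M
  have hc : 0 ≤ c := div_nonneg (Real.sqrt_nonneg _) hM.le
  have hrel w : |w ⬝ᵥ (H - Hhat) *ᵥ w| ≤ c * (w ⬝ᵥ Hhat *ᵥ w) := calc
    _ ≤ frobM (H - Hhat) * (w ⬝ᵥ w) := abs_dotProduct_mulVec_le_frobM _ w
    _ = c * (M * (w ⬝ᵥ w)) := by rw [← mul_assoc, div_mul_cancel₀ _ hM.ne']
    _ ≤ c * (w ⬝ᵥ Hhat *ᵥ w) := mul_le_mul_of_nonneg_left (hEig w) hc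
  have hTsymm : Tᵀ = T := (isHermitian_iff_isSymm.mp hT.isHermitian).eq
  have hTunit : IsUnit T.det := (isUnit_iff_isUnit_det T).mp hT.isUnit
  have hTHT : T * H⁻¹ * T = 1 := by
    rw [← hTsq, Matrix.mul_inv_rev, ← Matrix.mul_assoc, mul_nonsing_inv T hTunit, Matrix.one_mul,
      nonsing_inv_mul T hTunit]
  have hconj X : v ⬝ᵥ (T * X * T) *ᵥ v = (T *ᵥ v) ⬝ᵥ X *ᵥ (T *ᵥ v) := by
    nth_rewrite 1 [← hTsymm]
    rw [← mulVec_mulVec, ← mulVec_mulVec, dotProduct_transpose_mulVec, dotProduct_comm]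
  have hvv : v ⬝ᵥ v = (T *ᵥ v) ⬝ᵥ H⁻¹ *ᵥ (T *ᵥ v) := by rw [← hconj, hTHT, one_mulVec]
  rw [Matrix.mul_sub, Matrix.sub_mul, sub_mulVec, dotProduct_sub, hconj, hconj, hvv]
  exact hH.abs_dotProduct_inv_mulVec_sub_le hHhat hc hrel (T *ᵥ v)
end

section
/- Let m, m' ∈ ℝ^d and let H, H' be symmetric positive definite d×d matrices with all eigenvalues at least M > 0, and fix R₀ > 0. Define H_{m*} as the matrix with the same eigenvectors as H but each eigenvalue λ replaced by max{λ, m*}, where m* is the smallest value such that ‖H_{m*}^{−1} m‖₂ ≤ R₀; define H'_{m'*} analogously for m', H'. Then ‖H_{m*}^{−1} m − H'_{m'*}^{−1} m'‖₂² ≤ (2R₀/M)·(‖m − m'‖₂ + R₀·‖H − H'‖_F). -/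
open Matrix

/-- Euclidean norm of a vector in `ℝ^d`. -/
noncomputable def vnorm {d : ℕ} (v : Fin d → ℝ) : ℝ :=
  Real.sqrt (∑ i, v i ^ 2)

/-- The matrix with the same eigenvectors as `A` but each eigenvalue `λ` replaced by
`max λ s`. -/
noncomputable def clip {d : ℕ} {A : Matrix (Fin d) (Fin d) ℝ} (hA : A.IsHermitian)
    (s : ℝ) : Matrix (Fin d) (Fin d) ℝ :=
  (hA.eigenvectorUnitary : Matrix (Fin d) (Fin d) ℝ) *
    Matrix.diagonal (fun i => max (hA.eigenvalues i) s) *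
    star (hA.eigenvectorUnitary : Matrix (Fin d) (Fin d) ℝ)

/-- The smallest clipping threshold `m*` such that `‖(A_{m*})⁻¹ m‖₂ ≤ R₀`. -/
noncomputable def mstar {d : ℕ} {A : Matrix (Fin d) (Fin d) ℝ} (hA : A.IsHermitian)
    (m : Fin d → ℝ) (R₀ : ℝ) : ℝ :=
  sInf {s : ℝ | vnorm ((clip hA s)⁻¹.mulVec m) ≤ R₀}

namespace Stmt13Aux

variable {d : ℕ}

lemma dot_self_nonneg (v : Fin d → ℝ) : 0 ≤ v ⬝ᵥ v :=
  Finset.sum_nonneg fun i _ => mul_self_nonneg _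

lemma vnorm_nonneg (v : Fin d → ℝ) : 0 ≤ vnorm v := Real.sqrt_nonneg _

lemma vnorm_eq_sqrt (v : Fin d → ℝ) : vnorm v = Real.sqrt (v ⬝ᵥ v) := by
  unfold vnorm
  congr 1
  simp [dotProduct, sq]

lemma vnorm_sq (v : Fin d → ℝ) : vnorm v ^ 2 = v ⬝ᵥ v := by
  rw [vnorm_eq_sqrt, Real.sq_sqrt (dot_self_nonneg v)]

lemma dot_le_vnorms (v w : Fin d → ℝ) : v ⬝ᵥ w ≤ vnorm v * vnorm w := by
  have := Real.sum_mul_le_sqrt_mul_sqrt Finset.univ v w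
  simpa [dotProduct, vnorm] using this

lemma vnorm_neg (v : Fin d → ℝ) : vnorm (-v) = vnorm v := by
  unfold vnorm
  congr 1
  simp

lemma vnorm_sub_comm (v w : Fin d → ℝ) : vnorm (v - w) = vnorm (w - v) := by
  rw [← neg_sub, vnorm_neg]

lemma neg_vnorms_le_dot (v w : Fin d → ℝ) : -(vnorm v * vnorm w) ≤ v ⬝ᵥ w := by
  have h := dot_le_vnorms (-v) w
  rw [neg_dotProduct, vnorm_neg] at h
  linarith

lemma vnorm_add_le (v w : Fin d → ℝ) : vnorm (v + w) ≤ vnorm v + vnorm w := by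
  have h1 := dot_le_vnorms v w
  have h2 := vnorm_sq v
  have h3 := vnorm_sq w
  have h4 : (v + w) ⬝ᵥ (v + w) ≤ (vnorm v + vnorm w) ^ 2 := by
    have hc : w ⬝ᵥ v = v ⬝ᵥ w := dotProduct_comm w v
    simp only [add_dotProduct, dotProduct_add]
    nlinarith [vnorm_nonneg v, vnorm_nonneg w]
  calc vnorm (v + w) = Real.sqrt ((v + w) ⬝ᵥ (v + w)) := vnorm_eq_sqrt _
    _ ≤ Real.sqrt ((vnorm v + vnorm w) ^ 2) := Real.sqrt_le_sqrt h4
    _ = vnorm v + vnorm w := Real.sqrt_sq (add_nonneg (vnorm_nonneg v) (vnorm_nonneg w))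

lemma vnorm_sub_le (v w : Fin d → ℝ) : vnorm (v - w) ≤ vnorm v + vnorm w := by
  have := vnorm_add_le v (-w)
  rw [vnorm_neg] at this
  simpa [sub_eq_add_neg] using this

lemma frobM_nonneg (A : Matrix (Fin d) (Fin d) ℝ) : 0 ≤ frobM A := Real.sqrt_nonneg _

lemma frobM_sub_comm (A B : Matrix (Fin d) (Fin d) ℝ) : frobM (A - B) = frobM (B - A) := by
  unfold frobM
  congr 1
  refine Finset.sum_congr rfl fun i _ => Finset.sum_congr rfl fun j _ => ?_
  simp only [Matrix.sub_apply]
  ring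

lemma vnorm_mulVec_le (A : Matrix (Fin d) (Fin d) ℝ) (v : Fin d → ℝ) :
    vnorm (A *ᵥ v) ≤ frobM A * vnorm v := by
  have key : ∀ i, (A *ᵥ v) i ^ 2 ≤ (∑ j, A i j ^ 2) * (∑ j, v j ^ 2) := by
    intro i
    have := Finset.sum_mul_sq_le_sq_mul_sq Finset.univ (A i) v
    simpa [mulVec, dotProduct] using this
  calc vnorm (A *ᵥ v) = Real.sqrt (∑ i, (A *ᵥ v) i ^ 2) := rfl
    _ ≤ Real.sqrt (∑ i, (∑ j, A i j ^ 2) * (∑ j, v j ^ 2)) :=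
        Real.sqrt_le_sqrt (Finset.sum_le_sum fun i _ => key i)
    _ = Real.sqrt ((∑ i, ∑ j, A i j ^ 2) * (∑ j, v j ^ 2)) := by rw [← Finset.sum_mul]
    _ = frobM A * vnorm v := by
        rw [Real.sqrt_mul (by positivity)]
        rfl


section Orth

variable {d : ℕ}

lemma star_eq_t (C : Matrix (Fin d) (Fin d) ℝ) : star C = Cᵀ := by
  rw [Matrix.star_eq_conjTranspose, Matrix.conjTranspose_eq_transpose_of_trivial]

lemma dot_mulVec_left (U : Matrix (Fin d) (Fin d) ℝ) (v w : Fin d → ℝ) :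
    (star U *ᵥ v) ⬝ᵥ w = v ⬝ᵥ (U *ᵥ w) := by
  rw [star_eq_t, Matrix.mulVec_transpose, dotProduct_mulVec]

lemma dot_mulVec_orth {U : Matrix (Fin d) (Fin d) ℝ} (h1 : star U * U = 1)
    (v w : Fin d → ℝ) : (U *ᵥ v) ⬝ᵥ (U *ᵥ w) = v ⬝ᵥ w := by
  have := dot_mulVec_left (star U) v (U *ᵥ w)
  rw [star_star] at this
  rw [this, Matrix.mulVec_mulVec, h1, Matrix.one_mulVec]

lemma dot_starMulVec_orth {U : Matrix (Fin d) (Fin d) ℝ} (h2 : U * star U = 1)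
    (v w : Fin d → ℝ) : (star U *ᵥ v) ⬝ᵥ (star U *ᵥ w) = v ⬝ᵥ w := by
  have : star (star U) * star U = 1 := by rw [star_star]; exact h2
  exact dot_mulVec_orth this v w

lemma vnorm_mulVec_orth {U : Matrix (Fin d) (Fin d) ℝ} (h1 : star U * U = 1)
    (v : Fin d → ℝ) : vnorm (U *ᵥ v) = vnorm v := by
  rw [vnorm_eq_sqrt, vnorm_eq_sqrt, dot_mulVec_orth h1]

lemma sandwich_mulVec (U : Matrix (Fin d) (Fin d) ℝ) (f : Fin d → ℝ) (v : Fin d → ℝ) :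
    (U * Matrix.diagonal f * star U) *ᵥ v = U *ᵥ (fun i => f i * (star U *ᵥ v) i) := by
  rw [← Matrix.mulVec_mulVec, ← Matrix.mulVec_mulVec]
  have hd : Matrix.diagonal f *ᵥ (star U *ᵥ v) = fun i => f i * (star U *ᵥ v) i := by
    ext i
    rw [Matrix.mulVec_diagonal]
  rw [hd]

lemma sandwich_quad (U : Matrix (Fin d) (Fin d) ℝ) (f : Fin d → ℝ) (v : Fin d → ℝ) :
    v ⬝ᵥ ((U * Matrix.diagonal f * star U) *ᵥ v) = ∑ i, f i * ((star U *ᵥ v) i) ^ 2 := by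
  rw [sandwich_mulVec, ← dot_mulVec_left]
  simp only [dotProduct]
  refine Finset.sum_congr rfl fun i _ => ?_
  ring

lemma frob_sq (X : Matrix (Fin d) (Fin d) ℝ) : frobM X ^ 2 = ∑ i, ∑ j, X i j ^ 2 := by
  unfold frobM
  rw [Real.sq_sqrt]
  positivity

lemma frob_mulL {P : Matrix (Fin d) (Fin d) ℝ} (h1 : star P * P = 1)
    (X : Matrix (Fin d) (Fin d) ℝ) : frobM (P * X) = frobM X := by
  unfold frobM
  congr 1
  rw [Finset.sum_comm]
  conv_rhs => rw [Finset.sum_comm]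
  refine Finset.sum_congr rfl fun j _ => ?_
  have hcol : ∀ i, (P * X) i j = (P *ᵥ (fun k => X k j)) i := by
    intro i; simp [Matrix.mul_apply, Matrix.mulVec, dotProduct]
  have hdot := dot_mulVec_orth h1 (fun k => X k j) (fun k => X k j)
  calc ∑ i, (P * X) i j ^ 2 = ∑ i, (P *ᵥ (fun k => X k j)) i * (P *ᵥ (fun k => X k j)) i := by
        refine Finset.sum_congr rfl fun i _ => ?_
        rw [hcol i]; ring
    _ = (fun k => X k j) ⬝ᵥ (fun k => X k j) := hdot
    _ = ∑ i, X i j ^ 2 := by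
        simp only [dotProduct]
        exact Finset.sum_congr rfl fun i _ => (sq (X i j)).symm

lemma frob_mulR {Q : Matrix (Fin d) (Fin d) ℝ} (h2 : Q * star Q = 1)
    (X : Matrix (Fin d) (Fin d) ℝ) : frobM (X * Q) = frobM X := by
  unfold frobM
  congr 1
  refine Finset.sum_congr rfl fun i _ => ?_
  have h1' : star Qᵀ * Qᵀ = 1 := by
    rw [star_eq_t] at h2
    rw [star_eq_t, Matrix.transpose_transpose]
    exact h2
  have hrow : ∀ j, (X * Q) i j = (Qᵀ *ᵥ (X i)) j := by
    intro j; simp [Matrix.mul_apply, Matrix.mulVec, dotProduct, Matrix.transpose_apply, mul_comm]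
  have hdot := dot_mulVec_orth h1' (X i) (X i)
  calc ∑ j, (X * Q) i j ^ 2 = ∑ j, (Qᵀ *ᵥ X i) j * (Qᵀ *ᵥ X i) j := by
        refine Finset.sum_congr rfl fun j _ => ?_
        rw [hrow j]; ring
    _ = (X i) ⬝ᵥ (X i) := hdot
    _ = ∑ j, X i j ^ 2 := by
        simp only [dotProduct]
        exact Finset.sum_congr rfl fun j _ => (sq (X i j)).symm

lemma frob_le_of_entry_sq_le {X Y : Matrix (Fin d) (Fin d) ℝ}
    (h : ∀ i j, X i j ^ 2 ≤ Y i j ^ 2) : frobM X ≤ frobM Y := by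
  unfold frobM
  exact Real.sqrt_le_sqrt (Finset.sum_le_sum fun i _ => Finset.sum_le_sum fun j _ => h i j)

end Orth
section Clip

variable {d : ℕ} {A : Matrix (Fin d) (Fin d) ℝ}

/-- The eigenvector matrix. -/
noncomputable def evU (hA : A.IsHermitian) : Matrix (Fin d) (Fin d) ℝ :=
  (hA.eigenvectorUnitary : Matrix (Fin d) (Fin d) ℝ)

lemma evU_star_mul (hA : A.IsHermitian) : star (evU hA) * evU hA = 1 := by
  have := hA.eigenvectorUnitary.2
  rw [Matrix.mem_unitaryGroup_iff'] at this
  exact this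

lemma evU_mul_star (hA : A.IsHermitian) : evU hA * star (evU hA) = 1 := by
  have := hA.eigenvectorUnitary.2
  rw [Matrix.mem_unitaryGroup_iff] at this
  exact this

lemma clip_eq (hA : A.IsHermitian) (s : ℝ) :
    clip hA s = evU hA * Matrix.diagonal (fun i => max (hA.eigenvalues i) s) * star (evU hA) :=
  rfl

lemma A_eq_spectral (hA : A.IsHermitian) :
    A = evU hA * Matrix.diagonal hA.eigenvalues * star (evU hA) := by
  have h := hA.spectral_theorem
  have : RCLike.ofReal ∘ hA.eigenvalues = hA.eigenvalues := by
    funext i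
    simp [RCLike.ofReal_real_eq_id]
  rw [this] at h
  exact h

/-- Eigenvalues are bounded below by `M` when the quadratic form is. -/
lemma eig_lb (hA : A.IsHermitian) {M : ℝ}
    (hEig : ∀ v : Fin d → ℝ, M * (v ⬝ᵥ v) ≤ v ⬝ᵥ A.mulVec v) (i : Fin d) :
    M ≤ hA.eigenvalues i := by
  set v : Fin d → ℝ := fun k => evU hA k i with hv
  have hvb : v = ⇑(hA.eigenvectorBasis i) := by
    funext k
    exact hA.eigenvectorUnitary_apply k i
  have hnorm : v ⬝ᵥ v = 1 := by
    have h1 := evU_star_mul hA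
    have : (star (evU hA) * evU hA) i i = v ⬝ᵥ v := by
      simp [Matrix.mul_apply, Matrix.star_apply, dotProduct, hv]
    rw [h1] at this
    rw [← this, Matrix.one_apply_eq]
  have hmv : A *ᵥ v = hA.eigenvalues i • v := by
    rw [hvb]
    exact hA.mulVec_eigenvectorBasis i
  have := hEig v
  rw [hmv] at this
  rw [dotProduct_smul, smul_eq_mul, hnorm] at this
  simpa using this

/-- The inverse of the clipped matrix. -/
lemma clip_mul_right_inv (hA : A.IsHermitian) {s : ℝ}
    (hpos : ∀ i, 0 < max (hA.eigenvalues i) s) :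
    clip hA s * (evU hA * Matrix.diagonal (fun i => (max (hA.eigenvalues i) s)⁻¹) *
      star (evU hA)) = 1 := by
  rw [clip_eq]
  calc evU hA * Matrix.diagonal (fun i => max (hA.eigenvalues i) s) * star (evU hA) *
        (evU hA * Matrix.diagonal (fun i => (max (hA.eigenvalues i) s)⁻¹) * star (evU hA))
      = evU hA * Matrix.diagonal (fun i => max (hA.eigenvalues i) s) *
        (star (evU hA) * evU hA) * Matrix.diagonal (fun i => (max (hA.eigenvalues i) s)⁻¹) *
        star (evU hA) := by
        simp only [Matrix.mul_assoc]
    _ = 1 := by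
        rw [evU_star_mul, Matrix.mul_one, Matrix.mul_assoc, Matrix.mul_assoc,
          ← Matrix.mul_assoc (Matrix.diagonal _), Matrix.diagonal_mul_diagonal]
        have : (fun i => max (hA.eigenvalues i) s * (max (hA.eigenvalues i) s)⁻¹) =
            fun _ => (1 : ℝ) := by
          funext i
          exact mul_inv_cancel₀ (ne_of_gt (hpos i))
        rw [this, Matrix.diagonal_one, Matrix.one_mul, evU_mul_star]

lemma clip_inv_eq (hA : A.IsHermitian) {s : ℝ}
    (hpos : ∀ i, 0 < max (hA.eigenvalues i) s) :
    (clip hA s)⁻¹ = evU hA * Matrix.diagonal (fun i => (max (hA.eigenvalues i) s)⁻¹) *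
      star (evU hA) :=
  Matrix.inv_eq_right_inv (clip_mul_right_inv hA hpos)

lemma clip_mulVec_inv (hA : A.IsHermitian) {s : ℝ}
    (hpos : ∀ i, 0 < max (hA.eigenvalues i) s) (m : Fin d → ℝ) :
    clip hA s *ᵥ ((clip hA s)⁻¹ *ᵥ m) = m := by
  rw [clip_inv_eq hA hpos, Matrix.mulVec_mulVec, clip_mul_right_inv hA hpos, Matrix.one_mulVec]

lemma clip_inv_mulVec_eq (hA : A.IsHermitian) {s : ℝ}
    (hpos : ∀ i, 0 < max (hA.eigenvalues i) s) (m : Fin d → ℝ) :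
    (clip hA s)⁻¹ *ᵥ m = evU hA *ᵥ (fun i => (max (hA.eigenvalues i) s)⁻¹ *
      (star (evU hA) *ᵥ m) i) := by
  rw [clip_inv_eq hA hpos, sandwich_mulVec]

/-- quadratic form lower bound for clip -/
lemma clip_quad_lb (hA : A.IsHermitian) {s t : ℝ}
    (ht : ∀ i, t ≤ max (hA.eigenvalues i) s) (v : Fin d → ℝ) :
    t * (v ⬝ᵥ v) ≤ v ⬝ᵥ (clip hA s *ᵥ v) := by
  rw [clip_eq, sandwich_quad]
  have hv : v ⬝ᵥ v = ∑ i, ((star (evU hA) *ᵥ v) i) ^ 2 := by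
    rw [← dot_starMulVec_orth (evU_mul_star hA) v v]
    simp only [dotProduct]
    exact Finset.sum_congr rfl fun i _ => (sq ((star (evU hA) *ᵥ v) i)).symm
  rw [hv, Finset.mul_sum]
  exact Finset.sum_le_sum fun i _ =>
    mul_le_mul_of_nonneg_right (ht i) (sq_nonneg _)

/-- Frobenius-Lipschitz property of clipping. -/
lemma frob_clip_lip {B : Matrix (Fin d) (Fin d) ℝ} (hA : A.IsHermitian)
    (hB : B.IsHermitian) (s : ℝ) :
    frobM (clip hA s - clip hB s) ≤ frobM (A - B) := by
  set U := evU hA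
  set V := evU hB
  set lam := hA.eigenvalues
  set nu := hB.eigenvalues
  set G := star U * V with hG
  have key : ∀ (f : ℝ → ℝ),
      star U * ((U * Matrix.diagonal (fun i => f (lam i)) * star U) -
        (V * Matrix.diagonal (fun i => f (nu i)) * star V)) * V =
      Matrix.diagonal (fun i => f (lam i)) * G - G * Matrix.diagonal (fun i => f (nu i)) := by
    intro f
    rw [Matrix.mul_sub, Matrix.sub_mul]
    congr 1
    · calc star U * (U * Matrix.diagonal (fun i => f (lam i)) * star U) * V
          = (star U * U) * Matrix.diagonal (fun i => f (lam i)) * (star U * V) := by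
            simp only [Matrix.mul_assoc]
        _ = Matrix.diagonal (fun i => f (lam i)) * G := by
            rw [evU_star_mul, Matrix.one_mul, hG]
    · calc star U * (V * Matrix.diagonal (fun i => f (nu i)) * star V) * V
          = (star U * V) * Matrix.diagonal (fun i => f (nu i)) * (star V * V) := by
            simp only [Matrix.mul_assoc]
        _ = G * Matrix.diagonal (fun i => f (nu i)) := by
            rw [evU_star_mul, Matrix.mul_one, hG]
  have hUU : star (star U) * star U = 1 := by rw [star_star]; exact evU_mul_star hA
  have hVV : V * star V = 1 := evU_mul_star hB
  have e1 : frobM (clip hA s - clip hB s) =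
      frobM (star U * (clip hA s - clip hB s) * V) := by
    rw [frob_mulR hVV, frob_mulL hUU]
  have e2 : frobM (A - B) = frobM (star U * (A - B) * V) := by
    rw [frob_mulR hVV, frob_mulL hUU]
  rw [e1, e2]
  have hclip : star U * (clip hA s - clip hB s) * V =
      Matrix.diagonal (fun i => max (lam i) s) * G - G * Matrix.diagonal (fun i => max (nu i) s) := by
    have := key (fun t => max t s)
    rw [← this]
    rfl
  have hAB : star U * (A - B) * V =
      Matrix.diagonal lam * G - G * Matrix.diagonal nu := by
    have := key (fun t => t)
    rw [A_eq_spectral hA, A_eq_spectral hB]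
    convert this using 4 <;> rfl
  rw [hclip, hAB]
  refine frob_le_of_entry_sq_le fun i j => ?_
  simp only [Matrix.sub_apply, Matrix.diagonal_mul, Matrix.mul_diagonal]
  have habs : |max (lam i) s - max (nu j) s| ≤ |lam i - nu j| :=
    abs_max_sub_max_le_abs _ _ _
  have h1 : max (lam i) s * G i j - G i j * max (nu j) s =
      (max (lam i) s - max (nu j) s) * G i j := by ring
  have h2 : lam i * G i j - G i j * nu j = (lam i - nu j) * G i j := by ring
  rw [h1, h2, mul_pow, mul_pow]
  have : (max (lam i) s - max (nu j) s) ^ 2 ≤ (lam i - nu j) ^ 2 := by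
    rw [← sq_abs (max (lam i) s - max (nu j) s), ← sq_abs (lam i - nu j)]
    exact pow_le_pow_left₀ (abs_nonneg _) habs 2
  exact mul_le_mul_of_nonneg_right this (sq_nonneg _)

end Clip

section Mstar

variable {d : ℕ} {A : Matrix (Fin d) (Fin d) ℝ}

/-- Squared norm of the clipped Newton step in eigencoordinates. -/
noncomputable def Gf (hA : A.IsHermitian) (m : Fin d → ℝ) (s : ℝ) : ℝ :=
  ∑ i, ((max (hA.eigenvalues i) s)⁻¹ * (star (evU hA) *ᵥ m) i) ^ 2

variable {M : ℝ} (hM : 0 < M)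

include hM in
lemma max_pos (hA : A.IsHermitian) (hlb : ∀ i, M ≤ hA.eigenvalues i) (s : ℝ) (i : Fin d) :
    0 < max (hA.eigenvalues i) s :=
  lt_of_lt_of_le hM (le_trans (hlb i) (le_max_left _ _))

include hM in
lemma vnorm_clip_inv_eq_sqrt_Gf (hA : A.IsHermitian) (hlb : ∀ i, M ≤ hA.eigenvalues i)
    (m : Fin d → ℝ) (s : ℝ) :
    vnorm ((clip hA s)⁻¹ *ᵥ m) = Real.sqrt (Gf hA m s) := by
  rw [clip_inv_mulVec_eq hA (max_pos hM hA hlb s), vnorm_mulVec_orth (evU_star_mul hA)]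
  rfl

include hM in
lemma Gf_anti (hA : A.IsHermitian) (hlb : ∀ i, M ≤ hA.eigenvalues i) (m : Fin d → ℝ)
    {s t : ℝ} (hst : s ≤ t) : Gf hA m t ≤ Gf hA m s := by
  refine Finset.sum_le_sum fun i _ => ?_
  have hs := max_pos hM hA hlb s i
  have ht := max_pos hM hA hlb t i
  have hmax : max (hA.eigenvalues i) s ≤ max (hA.eigenvalues i) t :=
    max_le_max le_rfl hst
  have hinv : (max (hA.eigenvalues i) t)⁻¹ ≤ (max (hA.eigenvalues i) s)⁻¹ :=
    inv_anti₀ hs hmax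
  rw [mul_pow, mul_pow]
  refine mul_le_mul_of_nonneg_right ?_ (sq_nonneg _)
  rw [← sq_abs ((max (hA.eigenvalues i) t)⁻¹), ← sq_abs ((max (hA.eigenvalues i) s)⁻¹)]
  refine pow_le_pow_left₀ (abs_nonneg _) ?_ 2
  rw [abs_of_pos (inv_pos.mpr ht), abs_of_pos (inv_pos.mpr hs)]
  exact hinv

include hM in
lemma Gf_cont (hA : A.IsHermitian) (hlb : ∀ i, M ≤ hA.eigenvalues i) (m : Fin d → ℝ) :
    Continuous (Gf hA m) := by
  refine continuous_finset_sum _ fun i _ => ?_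
  have h1 : Continuous fun s : ℝ => max (hA.eigenvalues i) s :=
    continuous_const.max continuous_id
  have h2 : Continuous fun s : ℝ => (max (hA.eigenvalues i) s)⁻¹ :=
    h1.inv₀ fun s => ne_of_gt (max_pos hM hA hlb s i)
  exact (h2.mul continuous_const).pow 2

include hM in
lemma mem_S_iff (hA : A.IsHermitian) (hlb : ∀ i, M ≤ hA.eigenvalues i) (m : Fin d → ℝ)
    {R₀ : ℝ} (hR : 0 ≤ R₀) (s : ℝ) :
    vnorm ((clip hA s)⁻¹ *ᵥ m) ≤ R₀ ↔ Gf hA m s ≤ R₀ ^ 2 := by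
  rw [vnorm_clip_inv_eq_sqrt_Gf hM hA hlb m s]
  exact Real.sqrt_le_left hR

include hM in
/-- Structure of the optimal threshold `mstar`. -/
lemma mstar_dichotomy (hA : A.IsHermitian) (hlb : ∀ i, M ≤ hA.eigenvalues i)
    (m : Fin d → ℝ) {R₀ : ℝ} (hR : 0 < R₀) :
    vnorm ((clip hA (mstar hA m R₀))⁻¹ *ᵥ m) ≤ R₀ ∧
      (mstar hA m R₀ = 0 ∨
        (M ≤ mstar hA m R₀ ∧ R₀ ≤ vnorm ((clip hA (mstar hA m R₀))⁻¹ *ᵥ m))) := by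
  set S : Set ℝ := {s : ℝ | vnorm ((clip hA s)⁻¹.mulVec m) ≤ R₀} with hS
  have hmem : ∀ s, s ∈ S ↔ Gf hA m s ≤ R₀ ^ 2 := fun s => mem_S_iff hM hA hlb m hR.le s
  have hmstar : mstar hA m R₀ = sInf S := rfl
  by_cases hbdd : BddBelow S
  · -- the threshold is active
    -- S is nonempty: big thresholds work
    have hne : S.Nonempty := by
      set c := star (evU hA) *ᵥ m with hc
      set s₁ : ℝ := max M (Real.sqrt (∑ i, (c i) ^ 2) / R₀ + 1) with hs₁
      have hs₁pos : 0 < s₁ := lt_of_lt_of_le hM (le_max_left _ _)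
      refine ⟨s₁, (hmem s₁).2 ?_⟩
      have hsqrtle : Real.sqrt (∑ i, (c i) ^ 2) ≤ s₁ * R₀ := by
        have h1 : Real.sqrt (∑ i, (c i) ^ 2) / R₀ + 1 ≤ s₁ := le_max_right _ _
        have h2 : Real.sqrt (∑ i, (c i) ^ 2) / R₀ ≤ s₁ := by
          linarith
        calc Real.sqrt (∑ i, (c i) ^ 2) = Real.sqrt (∑ i, (c i) ^ 2) / R₀ * R₀ := by
              field_simp
          _ ≤ s₁ * R₀ := mul_le_mul_of_nonneg_right h2 hR.le
      have hGle : Gf hA m s₁ ≤ (∑ i, (c i) ^ 2) / s₁ ^ 2 := by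
        unfold Gf
        rw [Finset.sum_div]
        refine Finset.sum_le_sum fun i _ => ?_
        have hmx : s₁ ≤ max (hA.eigenvalues i) s₁ := le_max_right _ _
        have hpos := max_pos hM hA hlb s₁ i
        have hinv : (max (hA.eigenvalues i) s₁)⁻¹ ≤ s₁⁻¹ := inv_anti₀ hs₁pos hmx
        have h0 : (0:ℝ) ≤ (max (hA.eigenvalues i) s₁)⁻¹ := inv_nonneg.mpr hpos.le
        calc ((max (hA.eigenvalues i) s₁)⁻¹ * c i) ^ 2
            = ((max (hA.eigenvalues i) s₁)⁻¹) ^ 2 * (c i) ^ 2 := by ring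
          _ ≤ (s₁⁻¹) ^ 2 * (c i) ^ 2 :=
              mul_le_mul_of_nonneg_right (pow_le_pow_left₀ h0 hinv 2) (sq_nonneg _)
          _ = (c i) ^ 2 / s₁ ^ 2 := by
              rw [div_eq_mul_inv, inv_pow]
              ring
      have hfinal : (∑ i, (c i) ^ 2) / s₁ ^ 2 ≤ R₀ ^ 2 := by
        rw [div_le_iff₀ (by positivity)]
        have hss : (0:ℝ) ≤ ∑ i, (c i) ^ 2 := Finset.sum_nonneg fun i _ => sq_nonneg (c i)
        calc (∑ i, (c i) ^ 2) = Real.sqrt (∑ i, (c i) ^ 2) ^ 2 := (Real.sq_sqrt hss).symm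
          _ ≤ (s₁ * R₀) ^ 2 := by
              refine pow_le_pow_left₀ (Real.sqrt_nonneg _) hsqrtle 2
          _ = R₀ ^ 2 * s₁ ^ 2 := by ring
      exact le_trans hGle hfinal
    -- M is not in S
    have hMnotin : M ∉ S := by
      intro hMin
      have hall : ∀ s : ℝ, s ∈ S := by
        intro s
        rcases le_total s M with h | h
        · refine (hmem s).2 ?_
          have hGf : Gf hA m s = Gf hA m M := by
            unfold Gf
            refine Finset.sum_congr rfl fun i _ => ?_
            rw [max_eq_left (le_trans h (hlb i)), max_eq_left (hlb i)]
          rw [hGf]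
          exact (hmem M).1 hMin
        · exact (hmem s).2 (le_trans (Gf_anti hM hA hlb m h) ((hmem M).1 hMin))
      rcases hbdd with ⟨b, hb⟩
      have := hb (hall (b - 1))
      linarith [this]
    have hclosed : IsClosed S := by
      have hSeq : S = (Gf hA m) ⁻¹' (Set.Iic (R₀ ^ 2)) := by
        ext s
        exact hmem s
      rw [hSeq]
      exact IsClosed.preimage (Gf_cont hM hA hlb m) isClosed_Iic
    have hinfmem : sInf S ∈ S := hclosed.csInf_mem hne hbdd
    constructor
    · rw [hmstar]; exact hinfmem
    · right
      constructor
      · rw [hmstar]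
        refine le_csInf hne fun s hs => ?_
        by_contra hcon
        push_neg at hcon
        exact hMnotin ((hmem M).2
          (le_trans (Gf_anti hM hA hlb m hcon.le) ((hmem s).1 hs)))
      · by_contra hcon
        push_neg at hcon
        have h1 : vnorm ((clip hA (sInf S))⁻¹ *ᵥ m) < R₀ := by
          rw [hmstar] at hcon
          exact hcon
        have hGnn : 0 ≤ Gf hA m (sInf S) := Finset.sum_nonneg fun i _ => sq_nonneg _
        have h2 := vnorm_clip_inv_eq_sqrt_Gf hM hA hlb m (sInf S)
        have hsq := Real.sq_sqrt hGnn
        have hGlt : Gf hA m (sInf S) < R₀ ^ 2 := by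
          nlinarith [Real.sqrt_nonneg (Gf hA m (sInf S))]
        have hopen : IsOpen {s : ℝ | Gf hA m s < R₀ ^ 2} :=
          isOpen_lt (Gf_cont hM hA hlb m) continuous_const
        rcases Metric.isOpen_iff.mp hopen (sInf S) hGlt with ⟨ε, hε, hball⟩
        have hmem2 : sInf S - ε / 2 ∈ S := by
          refine (hmem _).2 (le_of_lt (hball ?_))
          have hd : (sInf S - ε / 2) - sInf S = -(ε / 2) := by ring
          rw [Metric.mem_ball, Real.dist_eq, hd, abs_neg, abs_of_pos (by linarith)]
          linarith
        have := csInf_le hbdd hmem2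
        linarith
  · -- inactive: sInf = 0 and 0 ∈ S
    have h0 : mstar hA m R₀ = 0 := by rw [hmstar, Real.sInf_of_not_bddBelow hbdd]
    rw [h0]
    obtain ⟨s, hsS, hs0⟩ := not_bddBelow_iff.mp hbdd 0
    have h0S : (0 : ℝ) ∈ S := (hmem 0).2 (le_trans (Gf_anti hM hA hlb m hs0.le) ((hmem s).1 hsS))
    exact ⟨h0S, Or.inl rfl⟩

end Mstar

section Core

variable {d : ℕ}

/-- scalar comparison for thresholds -/
lemma scalar_thresh {M nu s' sb : ℝ} (hM : 0 < M) (hMnu : M ≤ nu) (hMsb : M ≤ sb)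
    (hss : s' ≤ sb) : M * max nu sb ≤ sb * max nu s' := by
  have h1 : M * max nu sb ≤ sb * nu := by
    rcases le_total nu sb with h | h
    · rw [max_eq_right h]
      nlinarith
    · rw [max_eq_left h]
      nlinarith
  have h2 : sb * nu ≤ sb * max nu s' :=
    mul_le_mul_of_nonneg_left (le_max_left _ _) (by linarith)
  linarith

/-- Coordinate facts for the difference of the primed solution at two thresholds. -/
lemma w_facts {B : Matrix (Fin d) (Fin d) ℝ} (hB : B.IsHermitian) {M : ℝ} (hM : 0 < M)
    (hlb : ∀ i, M ≤ hB.eigenvalues i) (m' : Fin d → ℝ) {s' sb : ℝ}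
    (hss : s' ≤ sb) (hMsb : M ≤ sb) :
    0 ≤ ((clip hB s')⁻¹ *ᵥ m' - (clip hB sb)⁻¹ *ᵥ m') ⬝ᵥ ((clip hB sb)⁻¹ *ᵥ m') ∧
      M * (((clip hB s')⁻¹ *ᵥ m' - (clip hB sb)⁻¹ *ᵥ m') ⬝ᵥ
          ((clip hB s')⁻¹ *ᵥ m' - (clip hB sb)⁻¹ *ᵥ m')) ≤
        (sb - M) * (((clip hB s')⁻¹ *ᵥ m' - (clip hB sb)⁻¹ *ᵥ m') ⬝ᵥ
          ((clip hB sb)⁻¹ *ᵥ m')) := by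
  set c := star (evU hB) *ᵥ m' with hc
  set p : Fin d → ℝ := fun i => (max (hB.eigenvalues i) s')⁻¹ * c i with hp
  set q : Fin d → ℝ := fun i => (max (hB.eigenvalues i) sb)⁻¹ * c i with hq
  have hx' : (clip hB s')⁻¹ *ᵥ m' = evU hB *ᵥ p := clip_inv_mulVec_eq hB (max_pos hM hB hlb s') m'
  have hy : (clip hB sb)⁻¹ *ᵥ m' = evU hB *ᵥ q := clip_inv_mulVec_eq hB (max_pos hM hB hlb sb) m'
  have hw : (clip hB s')⁻¹ *ᵥ m' - (clip hB sb)⁻¹ *ᵥ m' = evU hB *ᵥ (p - q) := by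
    rw [hx', hy, Matrix.mulVec_sub]
  rw [hw, hy, dot_mulVec_orth (evU_star_mul hB), dot_mulVec_orth (evU_star_mul hB)]
  -- pointwise facts
  have hfacts : ∀ i : Fin d, 0 ≤ (p - q) i * q i ∧
      M * ((p - q) i * (p - q) i) ≤ (sb - M) * ((p - q) i * q i) := by
    intro i
    set nu := hB.eigenvalues i with hnu
    have hnupos : 0 < nu := lt_of_lt_of_le hM (hlb i)
    have hs'pos : 0 < max nu s' := max_pos hM hB hlb s' i
    have hsbpos : 0 < max nu sb := max_pos hM hB hlb sb i
    have hinvle : (max nu sb)⁻¹ ≤ (max nu s')⁻¹ :=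
      inv_anti₀ hs'pos (max_le_max le_rfl hss)
    have hpq : (p - q) i = ((max nu s')⁻¹ - (max nu sb)⁻¹) * c i := by
      simp only [Pi.sub_apply, hp, hq]
      ring
    have hqi : q i = (max nu sb)⁻¹ * c i := rfl
    set a := (max nu s')⁻¹ with ha
    set b := (max nu sb)⁻¹ with hb2
    have hbpos : 0 < b := inv_pos.mpr hsbpos
    have hapos : 0 < a := inv_pos.mpr hs'pos
    -- key scalar inequality : M * (a - b) ≤ (sb - M) * b
    have hkey : M * (a - b) ≤ (sb - M) * b := by
      have hcross := scalar_thresh hM (hlb i) hMsb hss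
      -- M * max nu sb ≤ sb * max nu s', i.e. M / max nu s' ≤ sb / max nu sb
      have hdiv : M * a ≤ sb * b := by
        rw [ha, hb2, ← div_eq_mul_inv, ← div_eq_mul_inv, div_le_div_iff₀ hs'pos hsbpos]
        linarith [hcross]
      nlinarith [hbpos.le, hM.le]
    constructor
    · rw [hpq, hqi]
      have : (a - b) * c i * (b * c i) = ((a - b) * b) * (c i) ^ 2 := by ring
      rw [this]
      exact mul_nonneg (mul_nonneg (by linarith) hbpos.le) (sq_nonneg _)
    · rw [hpq, hqi]
      have hab : 0 ≤ a - b := by linarith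
      nlinarith [sq_nonneg (c i), mul_le_mul_of_nonneg_right
        (mul_le_mul_of_nonneg_right hkey hab) (sq_nonneg (c i))]
  constructor
  · exact Finset.sum_nonneg fun i _ => (hfacts i).1
  · simp only [dotProduct]
    rw [Finset.mul_sum, Finset.mul_sum]
    exact Finset.sum_le_sum fun i _ => (hfacts i).2

/-- The bound on the difference of solutions at a common threshold. -/
lemma ebound {t R₀ F : ℝ} (ht : 0 < t) (hR : 0 ≤ R₀) (hF : 0 ≤ F)
    {Ac Bc : Matrix (Fin d) (Fin d) ℝ} {x y m₁ m₂ : Fin d → ℝ}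
    (hx : Ac *ᵥ x = m₁) (hy : Bc *ᵥ y = m₂)
    (hquad : t * ((x - y) ⬝ᵥ (x - y)) ≤ (x - y) ⬝ᵥ (Ac *ᵥ (x - y)))
    (hyR : vnorm y ≤ R₀) (hfro : frobM (Bc - Ac) ≤ F) :
    t * vnorm (x - y) ≤ vnorm (m₁ - m₂) + F * R₀ := by
  set e := x - y with he
  have hAe : Ac *ᵥ e = (m₁ - m₂) + (Bc - Ac) *ᵥ y := by
    rw [he, Matrix.mulVec_sub, hx, Matrix.sub_mulVec, hy]
    abel
  have hdot : e ⬝ᵥ (Ac *ᵥ e) = e ⬝ᵥ (m₁ - m₂) + e ⬝ᵥ ((Bc - Ac) *ᵥ y) := by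
    rw [hAe, dotProduct_add]
  have h1 : e ⬝ᵥ (m₁ - m₂) ≤ vnorm e * vnorm (m₁ - m₂) := dot_le_vnorms _ _
  have h2 : e ⬝ᵥ ((Bc - Ac) *ᵥ y) ≤ vnorm e * (F * R₀) := by
    calc e ⬝ᵥ ((Bc - Ac) *ᵥ y) ≤ vnorm e * vnorm ((Bc - Ac) *ᵥ y) := dot_le_vnorms _ _
      _ ≤ vnorm e * (frobM (Bc - Ac) * vnorm y) :=
          mul_le_mul_of_nonneg_left (vnorm_mulVec_le _ _) (vnorm_nonneg _)
      _ ≤ vnorm e * (F * R₀) := by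
          refine mul_le_mul_of_nonneg_left ?_ (vnorm_nonneg _)
          exact mul_le_mul hfro hyR (vnorm_nonneg _) hF
  have h3 : t * (vnorm e) ^ 2 ≤ vnorm e * (vnorm (m₁ - m₂) + F * R₀) := by
    rw [vnorm_sq]
    calc t * (e ⬝ᵥ e) ≤ e ⬝ᵥ (Ac *ᵥ e) := hquad
      _ = e ⬝ᵥ (m₁ - m₂) + e ⬝ᵥ ((Bc - Ac) *ᵥ y) := hdot
      _ ≤ vnorm e * (vnorm (m₁ - m₂) + F * R₀) := by
          rw [mul_add]
          exact add_le_add h1 h2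
  rcases eq_or_lt_of_le (vnorm_nonneg e) with h0 | h0
  · rw [← h0, mul_zero]
    exact add_nonneg (vnorm_nonneg _) (mul_nonneg hF hR)
  · have := le_of_mul_le_mul_right (by
      calc (t * vnorm e) * vnorm e = t * (vnorm e) ^ 2 := by ring
        _ ≤ vnorm e * (vnorm (m₁ - m₂) + F * R₀) := h3
        _ = (vnorm (m₁ - m₂) + F * R₀) * vnorm e := by ring) h0
    exact this

end Core

section Assembly

variable {d : ℕ}

/-- Equal-threshold case assembly. -/
lemma core_eq {M R₀ Δ : ℝ} (hM : 0 < M) (hR : 0 < R₀) (hΔ : 0 ≤ Δ)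
    {x x' : Fin d → ℝ} (hx : vnorm x ≤ R₀) (hx' : vnorm x' ≤ R₀)
    (hMe : M * vnorm (x - x') ≤ Δ) :
    vnorm (x - x') ^ 2 ≤ 2 * R₀ * Δ / M := by
  have hu2 : vnorm (x - x') ≤ 2 * R₀ := by
    have := vnorm_sub_le x x'
    linarith
  rw [le_div_iff₀ hM]
  have h0 := vnorm_nonneg (x - x')
  nlinarith

/-- scalar core of the asymmetric case -/
lemma scalar_core {M R₀ Δ sb a t wy P0 Px P1 P2 : ℝ}
    (hM : 0 < M) (hR : 0 < R₀) (hΔ : 0 ≤ Δ) (hsM : M ≤ sb)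
    (ha0 : 0 ≤ a) (ht0 : 0 ≤ t) (hwy : 0 ≤ wy)
    (hse : sb * a ≤ Δ)
    (hww : M * t ^ 2 ≤ (sb - M) * wy)
    (d1 : P0 ≤ 2 * Px) (d2 : Px = P1 - P2) (d3 : P1 ≤ a * R₀)
    (d4 : wy - t * a ≤ P2) (hP0 : 0 ≤ P0) (hP0' : P0 ≤ (2 * R₀) ^ 2) :
    P0 * M ≤ 2 * R₀ * Δ := by
  have d5 : M * (t * a - wy) ≤ (sb - M) * a ^ 2 / 4 := by
    rcases eq_or_lt_of_le (sub_nonneg.mpr hsM) with hk0 | hk0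
    · have h1 : M * t ^ 2 ≤ 0 := by
        rw [← hk0] at hww
        simpa using hww
      have h2 : t ^ 2 ≤ 0 := nonpos_of_mul_nonpos_right (by linarith [h1]) hM
      have h3 : t ^ 2 = 0 := le_antisymm h2 (sq_nonneg t)
      have ht00 : t = 0 := by
        have := pow_eq_zero_iff (n := 2) (by norm_num) |>.mp h3
        exact this
      rw [ht00, ← hk0]
      nlinarith
    · nlinarith [sq_nonneg ((sb - M) * a - 2 * M * t)]
  have hPx : M * Px ≤ M * (a * R₀) + (sb - M) * a ^ 2 / 4 := by
    have h3' : M * P1 ≤ M * (a * R₀) := mul_le_mul_of_nonneg_left d3 hM.le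
    have h4' : M * (wy - t * a) ≤ M * P2 := mul_le_mul_of_nonneg_left d4 hM.le
    rw [d2]
    nlinarith
  rcases le_or_gt a (4 * R₀) with hcase | hcase
  · have hstep : (sb - M) * a ^ 2 / 4 ≤ (sb - M) * (a * R₀) := by
      have h1 : a ^ 2 / 4 ≤ a * R₀ := by nlinarith
      have h2 : 0 ≤ sb - M := sub_nonneg.mpr hsM
      calc (sb - M) * a ^ 2 / 4 = (sb - M) * (a ^ 2 / 4) := by ring
        _ ≤ (sb - M) * (a * R₀) := mul_le_mul_of_nonneg_left h1 h2
    have hfinal : M * Px ≤ Δ * R₀ := by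
      calc M * Px ≤ M * (a * R₀) + (sb - M) * a ^ 2 / 4 := hPx
        _ ≤ M * (a * R₀) + (sb - M) * (a * R₀) := by linarith
        _ = (sb * a) * R₀ := by ring
        _ ≤ Δ * R₀ := mul_le_mul_of_nonneg_right hse hR.le
    nlinarith [mul_le_mul_of_nonneg_left d1 hM.le]
  · have hap : M * a ≤ Δ := by
      have : M * a ≤ sb * a := mul_le_mul_of_nonneg_right hsM ha0
      linarith
    have h1 : P0 * M ≤ (2 * R₀) ^ 2 * M := mul_le_mul_of_nonneg_right hP0' hM.le
    have h2 : (R₀ * M) * (4 * R₀) < (R₀ * M) * a :=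
      mul_lt_mul_of_pos_left hcase (mul_pos hR hM)
    have h3 : R₀ * (M * a) ≤ R₀ * Δ := mul_le_mul_of_nonneg_left hap hR.le
    have h4 : 0 ≤ R₀ * Δ := mul_nonneg hR.le hΔ
    nlinarith

/-- Asymmetric (active) case assembly. -/
lemma core_asym {M R₀ Δ sb : ℝ} (hM : 0 < M) (hR : 0 < R₀) (hΔ : 0 ≤ Δ)
    (hsM : M ≤ sb) {x y x' : Fin d → ℝ}
    (hxR : vnorm x = R₀) (hx'R : vnorm x' ≤ R₀)
    (hse : sb * vnorm (x - y) ≤ Δ)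
    (hwy : 0 ≤ (x' - y) ⬝ᵥ y)
    (hww : M * ((x' - y) ⬝ᵥ (x' - y)) ≤ (sb - M) * ((x' - y) ⬝ᵥ y)) :
    vnorm (x - x') ^ 2 ≤ 2 * R₀ * Δ / M := by
  have hcomm : ∀ v w : Fin d → ℝ, v ⬝ᵥ w = w ⬝ᵥ v := fun v w => dotProduct_comm v w
  have hxx : x ⬝ᵥ x = R₀ ^ 2 := by rw [← vnorm_sq, hxR]
  have hx'x' : x' ⬝ᵥ x' ≤ R₀ ^ 2 := by
    rw [← vnorm_sq]
    exact pow_le_pow_left₀ (vnorm_nonneg _) hx'R 2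
  have d1 : (x - x') ⬝ᵥ (x - x') ≤ 2 * ((x - x') ⬝ᵥ x) := by
    have e1 : (x - x') ⬝ᵥ (x - x') = x ⬝ᵥ x - 2 * (x ⬝ᵥ x') + x' ⬝ᵥ x' := by
      simp only [sub_dotProduct, dotProduct_sub]
      rw [hcomm x' x]
      ring
    have e2 : (x - x') ⬝ᵥ x = x ⬝ᵥ x - x ⬝ᵥ x' := by
      simp only [sub_dotProduct]
      rw [hcomm x' x]
    linarith
  have d2 : (x - x') ⬝ᵥ x = (x - y) ⬝ᵥ x - (x' - y) ⬝ᵥ x := by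
    simp only [sub_dotProduct]
    ring
  have d3 : (x - y) ⬝ᵥ x ≤ vnorm (x - y) * R₀ := by
    have := dot_le_vnorms (x - y) x
    rw [hxR] at this
    exact this
  have d4 : (x' - y) ⬝ᵥ y - vnorm (x' - y) * vnorm (x - y) ≤ (x' - y) ⬝ᵥ x := by
    have e3 : (x' - y) ⬝ᵥ x = (x' - y) ⬝ᵥ y + (x' - y) ⬝ᵥ (x - y) := by
      rw [← dotProduct_add]
      congr 1
      abel
    have e4 := neg_vnorms_le_dot (x' - y) (x - y)
    linarith
  have hww' : M * vnorm (x' - y) ^ 2 ≤ (sb - M) * ((x' - y) ⬝ᵥ y) := by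
    rw [vnorm_sq]
    exact hww
  have hP0 : 0 ≤ (x - x') ⬝ᵥ (x - x') := dot_self_nonneg _
  have hP0' : (x - x') ⬝ᵥ (x - x') ≤ (2 * R₀) ^ 2 := by
    rw [← vnorm_sq]
    have h2 : vnorm (x - x') ≤ 2 * R₀ := by
      have := vnorm_sub_le x x'
      rw [hxR] at this
      linarith
    exact pow_le_pow_left₀ (vnorm_nonneg _) h2 2
  have key := scalar_core hM hR hΔ hsM (vnorm_nonneg (x - y)) (vnorm_nonneg (x' - y))
    hwy hse hww' d1 d2 d3 d4 hP0 hP0'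
  rw [le_div_iff₀ hM, vnorm_sq]
  exact key

end Assembly

section Main

/-- Main inequality, assuming the thresholds are ordered. -/
lemma main_ineq {d : ℕ} (M R₀ : ℝ) (hM : 0 < M) (hR : 0 < R₀)
    (m m' : Fin d → ℝ) (H H' : Matrix (Fin d) (Fin d) ℝ)
    (hH : H.IsHermitian) (hH' : H'.IsHermitian)
    (hEig : ∀ v : Fin d → ℝ, M * (v ⬝ᵥ v) ≤ v ⬝ᵥ H.mulVec v)
    (hEig' : ∀ v : Fin d → ℝ, M * (v ⬝ᵥ v) ≤ v ⬝ᵥ H'.mulVec v)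
    (hord : mstar hH' m' R₀ ≤ mstar hH m R₀) :
    vnorm ((clip hH (mstar hH m R₀))⁻¹.mulVec m -
        (clip hH' (mstar hH' m' R₀))⁻¹.mulVec m') ^ 2 ≤
      2 * R₀ * (vnorm (m - m') + R₀ * frobM (H - H')) / M := by
  have hlb : ∀ i, M ≤ hH.eigenvalues i := eig_lb hH hEig
  have hlb' : ∀ i, M ≤ hH'.eigenvalues i := eig_lb hH' hEig'
  obtain ⟨hx_le, hbranch⟩ := mstar_dichotomy hM hH hlb m hR
  obtain ⟨hx'_le, hbranch'⟩ := mstar_dichotomy hM hH' hlb' m' hR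
  set s := mstar hH m R₀ with hs
  set s' := mstar hH' m' R₀ with hs'
  set x := (clip hH s)⁻¹ *ᵥ m with hx
  set x' := (clip hH' s')⁻¹ *ᵥ m' with hxp
  set F := frobM (H - H') with hF
  have hF0 : 0 ≤ F := frobM_nonneg _
  set Δ := vnorm (m - m') + R₀ * F with hΔdef
  have hΔ : 0 ≤ Δ := add_nonneg (vnorm_nonneg _) (mul_nonneg hR.le hF0)
  have hΔalt : Δ = vnorm (m - m') + F * R₀ := by rw [hΔdef, mul_comm]
  have hxm : clip hH s *ᵥ x = m := clip_mulVec_inv hH (max_pos hM hH hlb s) m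
  have hfro : frobM (clip hH' s - clip hH s) ≤ F := by
    calc frobM (clip hH' s - clip hH s) ≤ frobM (H' - H) := frob_clip_lip hH' hH s
      _ = F := frobM_sub_comm H' H
  by_cases hss : s = s'
  · -- equal thresholds
    have hym : clip hH' s *ᵥ x' = m' := by
      rw [hss]
      exact clip_mulVec_inv hH' (max_pos hM hH' hlb' s') m'
    have hquad : M * ((x - x') ⬝ᵥ (x - x')) ≤ (x - x') ⬝ᵥ (clip hH s *ᵥ (x - x')) :=
      clip_quad_lb hH (fun i => le_trans (hlb i) (le_max_left _ _)) _
    have hMe : M * vnorm (x - x') ≤ vnorm (m - m') + F * R₀ :=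
      ebound hM hR.le hF0 hxm hym hquad hx'_le hfro
    rw [← hΔalt] at hMe
    exact core_eq hM hR hΔ hx_le hx'_le hMe
  · -- strict inequality of thresholds: the unprimed threshold is active
    have hlt : s' < s := lt_of_le_of_ne hord fun h => hss h.symm
    have hMs : M ≤ s ∧ R₀ ≤ vnorm x := by
      rcases hbranch with h0 | h2
      · exfalso
        rcases hbranch' with h0' | ⟨hMs', _⟩
        · rw [h0, h0'] at hlt
          exact lt_irrefl _ hlt
        · rw [h0] at hlt
          linarith
      · exact h2
    have hxR : vnorm x = R₀ := le_antisymm hx_le hMs.2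
    set y := (clip hH' s)⁻¹ *ᵥ m' with hy
    have hym : clip hH' s *ᵥ y = m' := clip_mulVec_inv hH' (max_pos hM hH' hlb' s) m'
    have hyR : vnorm y ≤ R₀ := by
      calc vnorm y = Real.sqrt (Gf hH' m' s) := vnorm_clip_inv_eq_sqrt_Gf hM hH' hlb' m' s
        _ ≤ Real.sqrt (Gf hH' m' s') := Real.sqrt_le_sqrt (Gf_anti hM hH' hlb' m' hord)
        _ = vnorm x' := (vnorm_clip_inv_eq_sqrt_Gf hM hH' hlb' m' s').symm
        _ ≤ R₀ := hx'_le
    have hspos : 0 < s := lt_of_lt_of_le hM hMs.1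
    have hquad : s * ((x - y) ⬝ᵥ (x - y)) ≤ (x - y) ⬝ᵥ (clip hH s *ᵥ (x - y)) :=
      clip_quad_lb hH (fun i => le_max_right _ _) _
    have hse : s * vnorm (x - y) ≤ Δ := by
      rw [hΔalt]
      exact ebound hspos hR.le hF0 hxm hym hquad hyR hfro
    obtain ⟨hwy, hww⟩ := w_facts hH' hM hlb' m' hord hMs.1
    exact core_asym hM hR hΔ hMs.1 hxR hx'_le hse hwy hww

end Main

end Stmt13Aux

/-- Stability of the clipped Newton direction:
`‖H_{m*}⁻¹ m − H'_{m'*}⁻¹ m'‖₂² ≤ (2R₀/M)(‖m − m'‖₂ + R₀ ‖H − H'‖_F)`. -/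
theorem stmt_13 {d : ℕ} (M R₀ : ℝ) (hM : 0 < M) (hR : 0 < R₀)
    (m m' : Fin d → ℝ) (H H' : Matrix (Fin d) (Fin d) ℝ)
    (hH : H.PosDef) (hH' : H'.PosDef)
    (hEig : ∀ v : Fin d → ℝ, M * (v ⬝ᵥ v) ≤ v ⬝ᵥ H.mulVec v)
    (hEig' : ∀ v : Fin d → ℝ, M * (v ⬝ᵥ v) ≤ v ⬝ᵥ H'.mulVec v) :
    vnorm ((clip hH.1 (mstar hH.1 m R₀))⁻¹.mulVec m -
        (clip hH'.1 (mstar hH'.1 m' R₀))⁻¹.mulVec m') ^ 2 ≤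
      (2 * R₀ / M) * (vnorm (m - m') + R₀ * frobM (H - H')) := by
  have hrw : (2 * R₀ / M) * (vnorm (m - m') + R₀ * frobM (H - H')) =
      2 * R₀ * (vnorm (m - m') + R₀ * frobM (H - H')) / M := by ring
  rw [hrw]
  rcases le_total (mstar hH'.1 m' R₀) (mstar hH.1 m R₀) with h | h
  · exact Stmt13Aux.main_ineq M R₀ hM hR m m' H H' hH.1 hH'.1 hEig hEig' h
  · have hmain := Stmt13Aux.main_ineq M R₀ hM hR m' m H' H hH'.1 hH.1 hEig' hEig h
    rw [Stmt13Aux.vnorm_sub_comm ((clip hH'.1 (mstar hH'.1 m' R₀))⁻¹.mulVec m'),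
      Stmt13Aux.vnorm_sub_comm m' m, Stmt13Aux.frobM_sub_comm H' H] at hmain
    exact hmain
end

section
/- Let H be a symmetric positive definite matrix with eigenvalues ≥ M, and for thresholds s ≥ M let H_s denote the matrix with same eigenvectors and each eigenvalue λ replaced by max{λ, s}. If m*, m'* ≥ M with m* ≥ m'*, b = (H'_{m*})^{−1} m' and c = (H'_{m'*})^{−1} m' for a symmetric positive definite H' and vector m', then (c − b)·b ≥ 0 and hence ‖b − c‖₂² + ‖b‖₂² ≤ ‖c‖₂². -/
/-!
In the eigenbasis of `H'` both clipped matrices are diagonal, so with `w` the coordinates of `m'`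
in that basis, `b` and `c` have coordinates `wᵢ / max(λᵢ, m*)` and `wᵢ / max(λᵢ, m'*)`. Since
`m* ≥ m'*`, each term of `(c - b) ⬝ b` (computed in these orthonormal coordinates) is a
nonnegative multiple of `wᵢ²`. The norm inequality is then
`‖c‖² = ‖b - c‖² + ‖b‖² + 2 (c - b) ⬝ b`.
-/

open Matrix

namespace Matrix

variable {n α : Type*} [Fintype n] [DecidableEq n]

theorem mulVec_dotProduct_mulVec_of_mem_unitaryGroup [CommRing α] [StarRing α] [TrivialStar α]
    {U : Matrix n n α} (hU : U ∈ unitaryGroup n α) (v w : n → α) :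
    (U *ᵥ v) ⬝ᵥ (U *ᵥ w) = v ⬝ᵥ w := by
  rw [dotProduct_mulVec, ← vecMul_transpose, vecMul_vecMul,
    ← conjTranspose_eq_transpose_of_trivial, ← star_eq_conjTranspose,
    Unitary.star_mul_self_of_mem hU, vecMul_one]

theorem inv_mul_diagonal_mul_star_of_mem_unitaryGroup [Field α] [StarRing α]
    {U : Matrix n n α} (hU : U ∈ unitaryGroup n α) {f : n → α} (hf : ∀ i, f i ≠ 0) :
    (U * diagonal f * star U)⁻¹ = U * diagonal f⁻¹ * star U := by
  refine inv_eq_right_inv ?_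
  have hff : diagonal f * diagonal f⁻¹ = 1 := by
    rw [diagonal_mul_diagonal, ← diagonal_one]
    exact congrArg diagonal (funext fun i => mul_inv_cancel₀ (hf i))
  calc U * diagonal f * star U * (U * diagonal f⁻¹ * star U)
      = U * (diagonal f * (star U * U) * diagonal f⁻¹) * star U := by
        simp only [Matrix.mul_assoc]
    _ = 1 := by
      rw [Unitary.star_mul_self_of_mem hU, Matrix.mul_one, hff, Matrix.mul_one,
        Unitary.mul_star_self_of_mem hU]

theorem mul_diagonal_mul_mulVec [CommSemiring α] (U V : Matrix n n α) (f v : n → α) :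
    (U * diagonal f * V) *ᵥ v = U *ᵥ (f * (V *ᵥ v)) := by
  rw [← mulVec_mulVec, ← mulVec_mulVec]
  congr 1
  ext i
  exact mulVec_diagonal _ _ _

end Matrix

section Clip

variable {d : ℕ} {A : Matrix (Fin d) (Fin d) ℝ}

theorem clip_inv_mulVec (hA : A.PosDef) (s : ℝ) (v : Fin d → ℝ) :
    (clip hA.1 s)⁻¹ *ᵥ v = (hA.1.eigenvectorUnitary : Matrix (Fin d) (Fin d) ℝ) *ᵥ
      ((fun i => (max (hA.1.eigenvalues i) s)⁻¹) *
        (star (hA.1.eigenvectorUnitary : Matrix (Fin d) (Fin d) ℝ) *ᵥ v)) := by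
  rw [clip, inv_mul_diagonal_mul_star_of_mem_unitaryGroup hA.1.eigenvectorUnitary.2
    (fun i => (lt_max_of_lt_left (hA.eigenvalues_pos i)).ne'), mul_diagonal_mul_mulVec]
  rfl

theorem clip_inv_mulVec_sub_dotProduct_nonneg (hA : A.PosDef) {s t : ℝ} (hst : s ≤ t)
    (v : Fin d → ℝ) :
    0 ≤ ((clip hA.1 s)⁻¹ *ᵥ v - (clip hA.1 t)⁻¹ *ᵥ v) ⬝ᵥ ((clip hA.1 t)⁻¹ *ᵥ v) := by
  rw [clip_inv_mulVec hA, clip_inv_mulVec hA, ← mulVec_sub,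
    mulVec_dotProduct_mulVec_of_mem_unitaryGroup hA.1.eigenvectorUnitary.2]
  refine Finset.sum_nonneg fun i _ => ?_
  set w := star (hA.1.eigenvectorUnitary : Matrix (Fin d) (Fin d) ℝ) *ᵥ v
  have hs : 0 < max (hA.1.eigenvalues i) s := lt_max_of_lt_left (hA.eigenvalues_pos i)
  have hle : max (hA.1.eigenvalues i) s ≤ max (hA.1.eigenvalues i) t := max_le_max_left _ hst
  calc (0 : ℝ)
      ≤ ((max (hA.1.eigenvalues i) s)⁻¹ - (max (hA.1.eigenvalues i) t)⁻¹) *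
          (max (hA.1.eigenvalues i) t)⁻¹ * w i ^ 2 :=
        mul_nonneg (mul_nonneg (sub_nonneg.2 (inv_anti₀ hs hle))
          (inv_nonneg.2 (hs.trans_le hle).le)) (sq_nonneg _)
    _ = _ := by simp only [Pi.sub_apply, Pi.mul_apply]; ring

end Clip

theorem vnorm_sq {d : ℕ} (v : Fin d → ℝ) : vnorm v ^ 2 = v ⬝ᵥ v := by
  rw [vnorm, Real.sq_sqrt (Finset.sum_nonneg fun i _ => sq_nonneg _)]
  simp only [dotProduct, sq]

theorem vnorm_sub_sq_add_vnorm_sq_le {d : ℕ} {b c : Fin d → ℝ} (h : 0 ≤ (c - b) ⬝ᵥ b) :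
    vnorm (b - c) ^ 2 + vnorm b ^ 2 ≤ vnorm c ^ 2 := by
  have : c ⬝ᵥ c = (b - c) ⬝ᵥ (b - c) + b ⬝ᵥ b + 2 * ((c - b) ⬝ᵥ b) := by
    simp only [dotProduct, Pi.sub_apply, Finset.mul_sum, ← Finset.sum_add_distrib]
    exact Finset.sum_congr rfl fun i _ => by ring
  rw [vnorm_sq, vnorm_sq, vnorm_sq]
  linarith

theorem stmt_14_general {d : ℕ} (mA mB : ℝ)
    (hmAB : mB ≤ mA)
    (m' : Fin d → ℝ) (H' : Matrix (Fin d) (Fin d) ℝ) (hH' : H'.PosDef)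
    (b c : Fin d → ℝ)
    (hb : b = (clip hH'.1 mA)⁻¹.mulVec m')
    (hc : c = (clip hH'.1 mB)⁻¹.mulVec m') :
    0 ≤ (c - b) ⬝ᵥ b ∧ vnorm (b - c) ^ 2 + vnorm b ^ 2 ≤ vnorm c ^ 2 := by
  subst hb hc
  have hcb := clip_inv_mulVec_sub_dotProduct_nonneg hH' hmAB m'
  exact ⟨hcb, vnorm_sub_sq_add_vnorm_sq_le hcb⟩

/-- For a symmetric positive definite `H'`, a vector `m'`, and thresholds
`m* ≥ m'* ≥ M`, the clipped Newton directions `b = (H'_{m*})⁻¹ m'` and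
`c = (H'_{m'*})⁻¹ m'` satisfy `(c − b)⬝b ≥ 0`, hence
`‖b − c‖₂² + ‖b‖₂² ≤ ‖c‖₂²`. -/
theorem stmt_14 {d : ℕ} (M mA mB : ℝ) (hM : 0 < M)
    (hmB : M ≤ mB) (hmAB : mB ≤ mA)
    (m' : Fin d → ℝ) (H' : Matrix (Fin d) (Fin d) ℝ) (hH' : H'.PosDef)
    (b c : Fin d → ℝ)
    (hb : b = (clip hH'.1 mA)⁻¹.mulVec m')
    (hc : c = (clip hH'.1 mB)⁻¹.mulVec m') :
    0 ≤ (c - b) ⬝ᵥ b ∧ vnorm (b - c) ^ 2 + vnorm b ^ 2 ≤ vnorm c ^ 2 :=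
  stmt_14_general mA mB hmAB m' H' hH' b c hb hc
end

section
/- For all vectors a, b, c in ℝ^d with ‖a‖₂ = R₀, ‖c‖₂ ≤ R₀, and ‖b − c‖₂² + ‖b‖₂² ≤ ‖c‖₂², it holds that ‖a − c‖₂·‖b − c‖₂ ≤ 2·‖a − b‖₂·‖a‖₂. -/
/-!
The points `b` and `c` lie in the ball `B` with diameter `[0, c]`, and `a` has power
`x = ‖a‖² - ⟪a, c⟫` with respect to `B`. Inversion about `a` with radius `√x` maps `B` into itself,
so the images of `b` and `c` are at most `‖c‖` apart; the distance formula for inversion turns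
this into `x ‖b - c‖ ≤ ‖c‖ ‖a - b‖ ‖a - c‖`. Since `‖c‖ ≤ ‖a‖` gives `‖a - c‖² ≤ 2x`,
multiplying by `‖a - c‖` yields the claim.
-/

open EuclideanGeometry Metric

section Inversion

variable {V P : Type*} [NormedAddCommGroup V] [InnerProductSpace ℝ V] [MetricSpace P]
  [NormedAddTorsor V P]

theorem dist_inversion_sq_sub_sq {p m u : P} {ρ R : ℝ} (hu : u ≠ p)
    (hR : dist p m ^ 2 - ρ ^ 2 = R ^ 2) :
    dist (inversion p R u) m ^ 2 - ρ ^ 2 = (R / dist u p) ^ 2 * (dist u m ^ 2 - ρ ^ 2) := by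
  have hv : dist (inversion p R u) m = ‖(R / ‖u -ᵥ p‖) ^ 2 • (u -ᵥ p) - (m -ᵥ p)‖ := by
    rw [dist_eq_norm_vsub V, ← vsub_sub_vsub_cancel_right _ m p, inversion_vsub_center,
      dist_eq_norm_vsub V]
  rw [hv, dist_eq_norm_vsub V u p, dist_eq_norm_vsub V u m, ← vsub_sub_vsub_cancel_right u m p]
  rw [dist_comm, dist_eq_norm_vsub V] at hR
  have hp : ‖u -ᵥ p‖ ≠ 0 := by simpa using hu
  rw [norm_sub_sq_real, norm_sub_sq_real, norm_smul, inner_smul_left]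
  simp only [Real.norm_eq_abs, abs_sq, conj_trivial]
  field_simp
  linear_combination (‖u -ᵥ p‖ ^ 2 - R ^ 2) * hR

theorem inversion_mem_closedBall {p m u : P} {ρ R : ℝ} (hu : u ∈ closedBall m ρ) (hup : u ≠ p)
    (hR : dist p m ^ 2 - ρ ^ 2 = R ^ 2) :
    inversion p R u ∈ closedBall m ρ := by
  have hρ : 0 ≤ ρ := dist_nonneg.trans hu
  rw [mem_closedBall] at hu ⊢
  have hu_sq : dist u m ^ 2 ≤ ρ ^ 2 := pow_le_pow_left₀ dist_nonneg hu 2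
  have hinv_sq : dist (inversion p R u) m ^ 2 ≤ ρ ^ 2 := by
    nlinarith [dist_inversion_sq_sub_sq hup hR, sq_nonneg (R / dist u p)]
  exact (pow_le_pow_iff_left₀ dist_nonneg hρ two_ne_zero).mp hinv_sq

end Inversion

theorem mul_dist_le_of_mem_closedBall {V P : Type*} [NormedAddCommGroup V]
    [InnerProductSpace ℝ V] [MetricSpace P] [NormedAddTorsor V P] {m u w : P} {ρ : ℝ} (p : P)
    (hu : u ∈ closedBall m ρ) (hw : w ∈ closedBall m ρ) :
    (dist p m ^ 2 - ρ ^ 2) * dist u w ≤ 2 * ρ * (dist u p * dist w p) := by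
  have hρ : 0 ≤ ρ := dist_nonneg.trans hu
  rcases le_or_gt (dist p m ^ 2 - ρ ^ 2) 0 with hpow | hpow
  · exact (mul_nonpos_of_nonpos_of_nonneg hpow dist_nonneg).trans (by positivity)
  have hp : p ∉ closedBall m ρ := fun hp ↦ by
    nlinarith [mem_closedBall.mp hp, dist_nonneg (x := p) (y := m)]
  have hup : u ≠ p := by rintro rfl; exact hp hu
  have hwp : w ≠ p := by rintro rfl; exact hp hw
  -- the inversion sphere about `p` is orthogonal to `sphere m ρ`
  set R := √(dist p m ^ 2 - ρ ^ 2)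
  have hR : dist p m ^ 2 - ρ ^ 2 = R ^ 2 := (Real.sq_sqrt hpow.le).symm
  have hinv : dist (inversion p R u) (inversion p R w) ≤ 2 * ρ := by
    have := dist_triangle_right (inversion p R u) (inversion p R w) m
    linarith [mem_closedBall.mp (inversion_mem_closedBall hu hup hR),
      mem_closedBall.mp (inversion_mem_closedBall hw hwp hR)]
  rw [dist_inversion_inversion hup hwp, ← hR, div_mul_eq_mul_div,
    div_le_iff₀ (mul_pos (dist_pos.mpr hup) (dist_pos.mpr hwp))] at hinv
  exact hinv

section DiameterBall

variable {E : Type*} [NormedAddCommGroup E] [InnerProductSpace ℝ E]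

theorem mem_closedBall_half_smul_of_norm_sub_sq_add_norm_sq_le {b c : E}
    (h : ‖b - c‖ ^ 2 + ‖b‖ ^ 2 ≤ ‖c‖ ^ 2) :
    b ∈ closedBall ((1 / 2 : ℝ) • c) (‖c‖ / 2) := by
  have hsq : ‖b - (1 / 2 : ℝ) • c‖ ^ 2 ≤ (‖c‖ / 2) ^ 2 := by
    rw [norm_sub_sq_real] at h ⊢
    rw [norm_smul, inner_smul_right]
    norm_num
    linarith
  rw [mem_closedBall, dist_eq_norm]
  exact (pow_le_pow_iff_left₀ (norm_nonneg _) (by positivity) two_ne_zero).mp hsq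

theorem self_mem_closedBall_half_smul (c : E) :
    c ∈ closedBall ((1 / 2 : ℝ) • c) (‖c‖ / 2) := by
  rw [mem_closedBall, dist_eq_norm, show c - (1 / 2 : ℝ) • c = (1 / 2 : ℝ) • c by module,
    norm_smul]
  norm_num
  linarith

theorem dist_half_smul_sq_sub_sq (a c : E) :
    dist a ((1 / 2 : ℝ) • c) ^ 2 - (‖c‖ / 2) ^ 2 = ‖a‖ ^ 2 - inner ℝ a c := by
  rw [dist_eq_norm, norm_sub_sq_real, norm_smul, inner_smul_right]
  norm_num
  ring

end DiameterBall

theorem stmt_15_general {d : ℕ} (R₀ : ℝ)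
    (a b c : EuclideanSpace ℝ (Fin d))
    (ha : ‖a‖ = R₀) (hc : ‖c‖ ≤ R₀)
    (hbc : ‖b - c‖ ^ 2 + ‖b‖ ^ 2 ≤ ‖c‖ ^ 2) :
    ‖a - c‖ * ‖b - c‖ ≤ 2 * ‖a - b‖ * ‖a‖ := by
  rcases eq_or_ne a c with rfl | hac
  · simp only [sub_self, norm_zero, zero_mul]
    positivity
  have key := mul_dist_le_of_mem_closedBall a
    (mem_closedBall_half_smul_of_norm_sub_sq_add_norm_sq_le hbc) (self_mem_closedBall_half_smul c)
  rw [dist_half_smul_sq_sub_sq, dist_eq_norm, dist_eq_norm, dist_eq_norm, norm_sub_rev b a,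
    norm_sub_rev c a] at key
  set x := ‖a‖ ^ 2 - inner ℝ a c
  have hac_sq : ‖a - c‖ ^ 2 ≤ 2 * x := by
    rw [norm_sub_sq_real]
    nlinarith [norm_nonneg c]
  have hx : 0 < x := by
    nlinarith [norm_pos_iff.mpr (sub_ne_zero.mpr hac)]
  refine le_of_mul_le_mul_left ?_ hx
  calc x * (‖a - c‖ * ‖b - c‖) = ‖a - c‖ * (x * ‖b - c‖) := by ring
    _ ≤ ‖a - c‖ * (2 * (‖c‖ / 2) * (‖a - b‖ * ‖a - c‖)) := by gcongr
    _ = ‖c‖ * ‖a - b‖ * ‖a - c‖ ^ 2 := by ring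
    _ ≤ ‖a‖ * ‖a - b‖ * (2 * x) := by gcongr; linarith
    _ = x * (2 * ‖a - b‖ * ‖a‖) := by ring

/-- For `a, b, c ∈ ℝ^d` with `‖a‖ = R₀`, `‖c‖ ≤ R₀`, and `‖b − c‖² + ‖b‖² ≤ ‖c‖²`,
we have `‖a − c‖ ⬝ ‖b − c‖ ≤ 2 ‖a − b‖ ⬝ ‖a‖`. -/
theorem stmt_15 {d : ℕ} (R₀ : ℝ) (hR : 0 < R₀)
    (a b c : EuclideanSpace ℝ (Fin d))
    (ha : ‖a‖ = R₀) (hc : ‖c‖ ≤ R₀)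
    (hbc : ‖b - c‖ ^ 2 + ‖b‖ ^ 2 ≤ ‖c‖ ^ 2) :
    ‖a - c‖ * ‖b - c‖ ≤ 2 * ‖a - b‖ * ‖a‖ :=
  stmt_15_general R₀ a b c ha hc hbc
end

section
/- Let f : ℝ^d → ℝ be M-strongly convex with ρ-Lipschitz Hessian (in Frobenius norm), minimized at x* with minimum value f*. Fix x_B ∈ ℝ^d, let x̃ = x_B − (∇²f(x_B))^{−1}∇f(x_B), and let f̃(x) = ½(x − x̃)ᵀ ∇²f(x_B) (x − x̃). Then for every x with ‖x − x_B‖₂ ≤ M/ρ: f(x) − f* ≤ 2·f̃(x) + 12·ρ·(f(x_B) − f*)^{3/2}/M^{3/2}. -/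
open scoped RealInnerProductSpace

/-- Frobenius norm of a continuous linear operator on `EuclideanSpace ℝ (Fin d)`,
computed in the standard orthonormal basis. -/
noncomputable def frobNorm {d : ℕ}
    (A : EuclideanSpace ℝ (Fin d) →L[ℝ] EuclideanSpace ℝ (Fin d)) : ℝ :=
  Real.sqrt (∑ i, ∑ j, (A (EuclideanSpace.single j 1) i) ^ 2)

/-! Write `H = ∇²f(x_B)` and `Δ = x_B - x̃`, so that `H Δ = ∇f(x_B)`. The Lipschitz Hessian makes
the second-order Taylor model `m` of `f` at `x_B` accurate up to `ρ/6 ‖y - x_B‖³`, and completing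
the square with `H Δ = ∇f(x_B)` gives `m(y) = f(x_B) - ½⟪Δ, HΔ⟫ + f̃(y)`. At `x` this bounds
`f(x)` from above; at `x*` (where `f̃ ≥ 0`) it bounds `f*` from below; at `x̃` (where `f̃ = 0`),
together with `f* ≤ f(x̃)`, it bounds `‖Δ‖`. Strong convexity bounds `‖x_B - x*‖`. With
`t = √((f(x_B) - f*)/M)`, all cubic errors are `O(ρ t³)` except the one at `x`: that one is
absorbed by `f̃(x) ≥ M/2 ‖x - x̃‖²` when `‖x - x̃‖` is comparable to `M/ρ`, and otherwise
`‖x - x_B‖ ≤ ‖x - x̃‖ + ‖Δ‖` makes it `O(ρ t³)` too. -/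

open Set

lemma frobNorm_eq_sqrt_sum_norm_sq {d : ℕ}
    (A : EuclideanSpace ℝ (Fin d) →L[ℝ] EuclideanSpace ℝ (Fin d)) :
    frobNorm A = √(∑ j, ‖A (EuclideanSpace.single j 1)‖ ^ 2) := by
  simp only [frobNorm, EuclideanSpace.real_norm_sq_eq]
  rw [Finset.sum_comm]

lemma norm_apply_le_frobNorm_mul {d : ℕ}
    (A : EuclideanSpace ℝ (Fin d) →L[ℝ] EuclideanSpace ℝ (Fin d))
    (v : EuclideanSpace ℝ (Fin d)) :
    ‖A v‖ ≤ frobNorm A * ‖v‖ := by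
  have hAv : A v = ∑ j, v j • A (EuclideanSpace.single j 1) := by
    conv_lhs => rw [← (EuclideanSpace.basisFun (Fin d) ℝ).sum_repr v]
    simp [EuclideanSpace.basisFun_apply]
  calc ‖A v‖ ≤ ∑ j, ‖v j‖ * ‖A (EuclideanSpace.single j 1)‖ := by
        rw [hAv]
        exact (norm_sum_le _ _).trans_eq (by simp only [norm_smul])
    _ ≤ √(∑ j, ‖v j‖ ^ 2) * √(∑ j, ‖A (EuclideanSpace.single j 1)‖ ^ 2) :=
        Real.sum_mul_le_sqrt_mul_sqrt _ _ _
    _ = frobNorm A * ‖v‖ := by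
        rw [frobNorm_eq_sqrt_sum_norm_sq, EuclideanSpace.norm_eq, mul_comm]

lemma opNorm_le_frobNorm {d : ℕ}
    (A : EuclideanSpace ℝ (Fin d) →L[ℝ] EuclideanSpace ℝ (Fin d)) : ‖A‖ ≤ frobNorm A :=
  A.opNorm_le_bound (Real.sqrt_nonneg _) (norm_apply_le_frobNorm_mul A)

lemma norm_le_of_norm_deriv_le_mul_pow {F : Type*} [NormedAddCommGroup F] [NormedSpace ℝ F]
    {u u' : ℝ → F} {C : ℝ} (n : ℕ) (hu : ∀ t, HasDerivAt u (u' t) t) (h0 : u 0 = 0)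
    (hbound : ∀ t ∈ Ico (0 : ℝ) 1, ‖u' t‖ ≤ C * t ^ n) : ‖u 1‖ ≤ C / (n + 1) := by
  have hB (t : ℝ) : HasDerivAt (fun s => C * s ^ (n + 1) / (n + 1)) (C * t ^ n) t :=
    (((hasDerivAt_pow (n + 1) t).const_mul C).div_const ((n : ℝ) + 1)).congr_deriv
      (by push_cast; field_simp)
  simpa using image_norm_le_of_norm_deriv_right_le_deriv_boundary
    (fun t _ => (hu t).continuousAt.continuousWithinAt) (fun t _ => (hu t).hasDerivWithinAt)
    (by simp [h0]) hB hbound (right_mem_Icc.2 zero_le_one)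

lemma add_deriv_add_half_le_of_deriv2_ge {φ φ' φ'' : ℝ → ℝ} {c : ℝ}
    (hφ : ∀ t, HasDerivAt φ (φ' t) t) (hφ' : ∀ t, HasDerivAt φ' (φ'' t) t)
    (hc : ∀ t, c ≤ φ'' t) : φ 0 + φ' 0 + c / 2 ≤ φ 1 := by
  have hmono : Monotone fun t => φ' t - c * t :=
    monotone_of_hasDerivAt_nonneg (fun t => (hφ' t).sub ((hasDerivAt_id t).const_mul c))
      fun t => by simpa using hc t
  have hderiv (t : ℝ) : HasDerivAt (fun t => φ t - φ' 0 * t - c / 2 * t ^ 2)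
      (φ' t - φ' 0 - c * t) t :=
    (((hφ t).sub ((hasDerivAt_id t).const_mul (φ' 0))).sub
      ((hasDerivAt_pow 2 t).const_mul (c / 2))).congr_deriv
      (by simp only [mul_one, Nat.cast_ofNat, Nat.add_one_sub_one, pow_one]; ring)
  have hmonoOn : MonotoneOn (fun t => φ t - φ' 0 * t - c / 2 * t ^ 2) (Ici 0) := by
    refine monotoneOn_of_hasDerivWithinAt_nonneg (convex_Ici 0)
      (fun t _ => (hderiv t).continuousAt.continuousWithinAt)
      (fun t _ => (hderiv t).hasDerivWithinAt) fun t ht => ?_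
    rw [interior_Ici] at ht
    linarith [hmono ht.le]
  linarith [hmonoOn self_mem_Ici (mem_Ici.2 zero_le_one) zero_le_one]

section InnerProductSpace

variable {E : Type*} [NormedAddCommGroup E] [InnerProductSpace ℝ E]

lemma inner_apply_add_half_inner_eq {T : E →L[ℝ] E} (hT : (T : E →ₗ[ℝ] E).IsSymmetric)
    (u v : E) :
    ⟪T u, v⟫ + 1 / 2 * ⟪v, T v⟫ = 1 / 2 * ⟪v + u, T (v + u)⟫ - 1 / 2 * ⟪u, T u⟫ := by
  have huv : ⟪T u, v⟫ = ⟪u, T v⟫ := hT u v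
  have hvu : ⟪T v, u⟫ = ⟪v, T u⟫ := hT v u
  rw [map_add, inner_add_left, inner_add_right, inner_add_right, huv, real_inner_comm (T v) u,
    ← hvu]
  ring

lemma hasDerivAt_add_smul (a w : E) (t : ℝ) : HasDerivAt (fun s : ℝ => a + s • w) w t :=
  ((hasDerivAt_id t).smul_const w).const_add a |>.congr_deriv (one_smul ℝ w)

variable [CompleteSpace E] {f : E → ℝ} {ρ M : ℝ}

lemma inner_fderiv_gradient_apply (x v w : E) :
    ⟪fderiv ℝ (gradient f) x v, w⟫ = fderiv ℝ (fderiv ℝ f) x v w := by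
  have : gradient f = (InnerProductSpace.toDual ℝ E).symm ∘ fderiv ℝ f := rfl
  rw [this, LinearIsometryEquiv.comp_fderiv]
  exact InnerProductSpace.toDual_symm_apply

lemma isSymmetric_fderiv_gradient (hf : ContDiff ℝ 2 f) (x : E) :
    (fderiv ℝ (gradient f) x : E →ₗ[ℝ] E).IsSymmetric := by
  intro v w
  have hsymm := hf.contDiffAt.isSymmSndFDerivAt (x := x) (by simp)
  change ⟪fderiv ℝ (gradient f) x v, w⟫ = ⟪v, fderiv ℝ (gradient f) x w⟫
  rw [← real_inner_comm v, inner_fderiv_gradient_apply, inner_fderiv_gradient_apply, hsymm]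

lemma hasFDerivAt_gradient (hf : ContDiff ℝ 2 f) (x : E) :
    HasFDerivAt (gradient f) (fderiv ℝ (gradient f) x) x := by
  have : ContDiff ℝ 1 (gradient f) :=
    (InnerProductSpace.toDual ℝ E).symm.contDiff.comp (hf.fderiv_right le_rfl)
  exact (this.differentiable one_ne_zero x).hasFDerivAt

lemma hasDerivAt_gradient_add_smul (hf : ContDiff ℝ 2 f) (a w : E) (t : ℝ) :
    HasDerivAt (fun s : ℝ => gradient f (a + s • w)) (fderiv ℝ (gradient f) (a + t • w) w) t :=
  (hasFDerivAt_gradient hf _).comp_hasDerivAt t (hasDerivAt_add_smul a w t)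

lemma hasDerivAt_comp_add_smul (hf : ContDiff ℝ 2 f) (a w : E) (t : ℝ) :
    HasDerivAt (fun s : ℝ => f (a + s • w)) ⟪gradient f (a + t • w), w⟫ t := by
  rw [inner_gradient_left]
  exact (hf.differentiable two_ne_zero _).hasFDerivAt.comp_hasDerivAt t
    (hasDerivAt_add_smul a w t)

lemma norm_gradient_sub_sub_le (hf : ContDiff ℝ 2 f)
    (hLip : ∀ x y, ‖fderiv ℝ (gradient f) x - fderiv ℝ (gradient f) y‖ ≤ ρ * ‖x - y‖) (a w : E) :
    ‖gradient f (a + w) - gradient f a - fderiv ℝ (gradient f) a w‖ ≤ ρ / 2 * ‖w‖ ^ 2 := by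
  set H := fderiv ℝ (gradient f)
  have hu (t : ℝ) : HasDerivAt (fun s : ℝ => gradient f (a + s • w) - gradient f a - s • H a w)
      (H (a + t • w) w - H a w) t :=
    ((hasDerivAt_gradient_add_smul hf a w t).sub_const _).sub
      (((hasDerivAt_id t).smul_const _).congr_deriv (one_smul ℝ _))
  have hbound : ∀ t ∈ Ico (0 : ℝ) 1, ‖H (a + t • w) w - H a w‖ ≤ ρ * ‖w‖ ^ 2 * t ^ 1 := by
    intro t ht
    calc _ = ‖(H (a + t • w) - H a) w‖ := rfl
      _ ≤ ρ * ‖a + t • w - a‖ * ‖w‖ := (ContinuousLinearMap.le_opNorm _ _).trans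
          (mul_le_mul_of_nonneg_right (hLip _ _) (norm_nonneg w))
      _ = ρ * ‖w‖ ^ 2 * t ^ 1 := by
          rw [add_sub_cancel_left, norm_smul, Real.norm_of_nonneg ht.1]; ring
  have := norm_le_of_norm_deriv_le_mul_pow 1 hu (by simp) hbound
  rw [one_smul, one_smul] at this
  convert this using 1
  push_cast
  ring

lemma abs_taylor_remainder_le (hf : ContDiff ℝ 2 f)
    (hLip : ∀ x y, ‖fderiv ℝ (gradient f) x - fderiv ℝ (gradient f) y‖ ≤ ρ * ‖x - y‖) (a w : E) :
    |f (a + w) - f a - ⟪gradient f a, w⟫ - 1 / 2 * ⟪w, fderiv ℝ (gradient f) a w⟫|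
      ≤ ρ / 6 * ‖w‖ ^ 3 := by
  set H := fderiv ℝ (gradient f) a
  have hu (t : ℝ) : HasDerivAt
      (fun s : ℝ => f (a + s • w) - f a - s * ⟪gradient f a, w⟫ - s ^ 2 / 2 * ⟪w, H w⟫)
      ⟪gradient f (a + t • w) - gradient f a - H (t • w), w⟫ t := by
    refine ((((hasDerivAt_comp_add_smul hf a w t).sub_const _).sub
      ((hasDerivAt_id t).mul_const _)).sub
      (((hasDerivAt_pow 2 t).div_const 2).mul_const _)).congr_deriv ?_
    rw [map_smul, inner_sub_left, inner_sub_left, real_inner_smul_left, real_inner_comm (H w)]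
    push_cast
    ring
  have hbound : ∀ t ∈ Ico (0 : ℝ) 1,
      ‖⟪gradient f (a + t • w) - gradient f a - H (t • w), w⟫‖ ≤ ρ / 2 * ‖w‖ ^ 3 * t ^ 2 := by
    intro t ht
    calc _ ≤ ‖gradient f (a + t • w) - gradient f a - H (t • w)‖ * ‖w‖ :=
          norm_inner_le_norm _ _
      _ ≤ ρ / 2 * ‖t • w‖ ^ 2 * ‖w‖ :=
          mul_le_mul_of_nonneg_right (norm_gradient_sub_sub_le hf hLip a _) (norm_nonneg w)
      _ = ρ / 2 * ‖w‖ ^ 3 * t ^ 2 := by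
          rw [norm_smul, Real.norm_of_nonneg ht.1]; ring
  have := norm_le_of_norm_deriv_le_mul_pow 2 hu (by simp) hbound
  rw [one_smul, Real.norm_eq_abs] at this
  convert this using 1
  · norm_num
  · push_cast; ring

lemma abs_sub_newton_model_le (hf : ContDiff ℝ 2 f)
    (hLip : ∀ x y, ‖fderiv ℝ (gradient f) x - fderiv ℝ (gradient f) y‖ ≤ ρ * ‖x - y‖)
    {xB xt : E} (hxt : fderiv ℝ (gradient f) xB (xB - xt) = gradient f xB) (y : E) :
    |f y - (f xB - 1 / 2 * ⟪xB - xt, fderiv ℝ (gradient f) xB (xB - xt)⟫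
        + 1 / 2 * ⟪y - xt, fderiv ℝ (gradient f) xB (y - xt)⟫)| ≤ ρ / 6 * ‖y - xB‖ ^ 3 := by
  have htaylor := abs_taylor_remainder_le hf hLip xB (y - xB)
  have hsquare := inner_apply_add_half_inner_eq (isSymmetric_fderiv_gradient hf xB) (xB - xt)
    (y - xB)
  rw [hxt, sub_add_sub_cancel] at hsquare
  rw [add_sub_cancel] at htaylor
  rw [hxt]
  convert htaylor using 2
  linarith

lemma mul_sq_norm_newton_step_le (hf : ContDiff ℝ 2 f)
    (hLip : ∀ x y, ‖fderiv ℝ (gradient f) x - fderiv ℝ (gradient f) y‖ ≤ ρ * ‖x - y‖)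
    (hsc : ∀ x v : E, M * ‖v‖ ^ 2 ≤ ⟪v, fderiv ℝ (gradient f) x v⟫)
    {xstar : E} (hmin : ∀ x, f xstar ≤ f x)
    {xB xt : E} (hxt : fderiv ℝ (gradient f) xB (xB - xt) = gradient f xB) :
    M * ‖xB - xt‖ ^ 2 ≤ 2 * (f xB - f xstar) + ρ / 3 * ‖xB - xt‖ ^ 3 := by
  have hxt_upper := (abs_le.1 (abs_sub_newton_model_le hf hLip hxt xt)).2
  simp only [sub_self, inner_zero_left, mul_zero, add_zero, norm_sub_rev xt] at hxt_upper
  linarith [hmin xt, hsc xB (xB - xt)]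

lemma add_inner_gradient_add_le (hf : ContDiff ℝ 2 f)
    (hsc : ∀ x v : E, M * ‖v‖ ^ 2 ≤ ⟪v, fderiv ℝ (gradient f) x v⟫) (a w : E) :
    f a + ⟪gradient f a, w⟫ + M / 2 * ‖w‖ ^ 2 ≤ f (a + w) := by
  have hφ' (t : ℝ) : HasDerivAt (fun s : ℝ => ⟪gradient f (a + s • w), w⟫)
      ⟪w, fderiv ℝ (gradient f) (a + t • w) w⟫ t :=
    ((hasDerivAt_gradient_add_smul hf a w t).inner ℝ (hasDerivAt_const t w)).congr_deriv
      (by rw [inner_zero_right, zero_add, real_inner_comm])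
  have := add_deriv_add_half_le_of_deriv2_ge (hasDerivAt_comp_add_smul hf a w) hφ'
    fun t => hsc _ w
  simp only [zero_smul, add_zero, one_smul] at this
  linarith

lemma half_mul_norm_sub_sq_le_sub_of_forall_le (hf : ContDiff ℝ 2 f)
    (hsc : ∀ x v : E, M * ‖v‖ ^ 2 ≤ ⟪v, fderiv ℝ (gradient f) x v⟫)
    {xstar : E} (hmin : ∀ x, f xstar ≤ f x) (y : E) :
    M / 2 * ‖y - xstar‖ ^ 2 ≤ f y - f xstar := by
  have hcrit : fderiv ℝ f xstar = 0 :=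
    IsLocalMin.fderiv_eq_zero (Filter.Eventually.of_forall hmin)
  have := add_inner_gradient_add_le hf hsc xstar (y - xstar)
  rw [inner_gradient_left, hcrit, add_sub_cancel] at this
  simp only [zero_apply, add_zero] at this
  linarith

end InnerProductSpace

lemma mul_pow_three_le_of_le_add {M ρ Q r t X : ℝ} (hM : 0 < M) (hρ : 0 < ρ) (hQ : 0 ≤ Q)
    (hr : 0 ≤ r) (ht : 0 ≤ t) (hX : 0 ≤ X) (hXM : ρ * X ≤ M) (hXQr : X ≤ Q + r)
    (hrQX : r ≤ Q + X) (hrt : M * r ^ 2 ≤ 2 * M * t ^ 2 + ρ / 3 * r ^ 3) :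
    ρ * X ^ 3 ≤ 3 * M * Q ^ 2 + 48 * ρ * t ^ 3 := by
  rcases le_or_gt (3 * M) (5 * ρ * Q) with hQbig | hQsmall
  · have hXQ : 3 * X ≤ 5 * Q := le_of_mul_le_mul_left (by linarith) hρ
    have hXQ2 : (3 * X) ^ 2 ≤ (5 * Q) ^ 2 := by gcongr
    calc ρ * X ^ 3 = ρ * X * X ^ 2 := by ring
      _ ≤ M * X ^ 2 := by gcongr
      _ ≤ 3 * M * Q ^ 2 + 48 * ρ * t ^ 3 := by
        nlinarith [mul_le_mul_of_nonneg_left hXQ2 hM.le, mul_nonneg hρ.le (pow_nonneg ht 3)]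
  · have hρr : ρ * r ≤ 8 / 5 * M := by nlinarith [mul_le_mul_of_nonneg_left hrQX hρ.le]
    have hr2 : 7 * r ^ 2 ≤ 30 * t ^ 2 := by
      have : ρ * r * r ^ 2 ≤ 8 / 5 * M * r ^ 2 := by gcongr
      nlinarith
    have hrt' : 4 * r ≤ 9 * t := by nlinarith
    have hX3 : X ^ 3 ≤ 4 * Q ^ 3 + 4 * r ^ 3 := by
      calc X ^ 3 ≤ (Q + r) ^ 3 := by gcongr
        _ ≤ 4 * Q ^ 3 + 4 * r ^ 3 := by
          nlinarith [mul_nonneg (add_nonneg hQ hr) (sq_nonneg (Q - r))]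
    have hQ3 : 5 * ρ * Q * Q ^ 2 ≤ 3 * M * Q ^ 2 := by gcongr
    have hr3 : (4 * r) ^ 3 ≤ (9 * t) ^ 3 := by gcongr
    nlinarith [mul_le_mul_of_nonneg_left hX3 hρ.le, mul_le_mul_of_nonneg_left hr3 hρ.le,
      mul_nonneg hM.le (sq_nonneg Q), mul_nonneg hρ.le (pow_nonneg ht 3)]

lemma pow_three_le_of_half_mul_sq_le {M s t : ℝ} (hM : 0 < M) (hs : 0 ≤ s) (ht : 0 ≤ t)
    (h : M / 2 * s ^ 2 ≤ M * t ^ 2) : s ^ 3 ≤ (3 / 2 * t) ^ 3 := by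
  have hsq : s ^ 2 ≤ (3 / 2 * t) ^ 2 := by nlinarith
  gcongr
  exact (pow_le_pow_iff_left₀ hs (by positivity) two_ne_zero).1 hsq

lemma rpow_three_halves_div_rpow_three_halves {a b : ℝ} (ha : 0 ≤ a) (hb : 0 ≤ b) :
    a ^ ((3 : ℝ) / 2) / b ^ ((3 : ℝ) / 2) = √(a / b) ^ 3 := by
  rw [← Real.div_rpow ha hb, Real.sqrt_eq_rpow, ← Real.rpow_natCast,
    ← Real.rpow_mul (div_nonneg ha hb)]
  norm_num

/-- Quadratic-model bound: for an `M`-strongly convex `f` with `ρ`-Lipschitz Hessian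
minimized at `x*`, with Newton target `x̃ = x_B − (∇²f(x_B))⁻¹∇f(x_B)` and quadratic
model `f̃(x) = ½⟪x − x̃, ∇²f(x_B)(x − x̃)⟫`, every `x` with `‖x − x_B‖ ≤ M/ρ` satisfies
`f x − f* ≤ 2 f̃(x) + 12 ρ (f(x_B) − f*)^{3/2} / M^{3/2}`. -/
theorem stmt_16 {d : ℕ} (f : EuclideanSpace ℝ (Fin d) → ℝ) (M ρ : ℝ)
    (hM : 0 < M) (hρ : 0 < ρ)
    (hf : ContDiff ℝ 2 f)
    (hsc : ∀ x v : EuclideanSpace ℝ (Fin d),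
      M * ‖v‖ ^ 2 ≤ ⟪v, fderiv ℝ (gradient f) x v⟫)
    (hLip : ∀ x x' : EuclideanSpace ℝ (Fin d),
      frobNorm (fderiv ℝ (gradient f) x - fderiv ℝ (gradient f) x') ≤ ρ * ‖x - x'‖)
    (xstar : EuclideanSpace ℝ (Fin d)) (hmin : ∀ x, f xstar ≤ f x)
    (xB xtilde : EuclideanSpace ℝ (Fin d))
    (hxt : fderiv ℝ (gradient f) xB (xB - xtilde) = gradient f xB) :
    ∀ x : EuclideanSpace ℝ (Fin d), ‖x - xB‖ ≤ M / ρ →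
      f x - f xstar ≤
        2 * ((1 / 2) * ⟪x - xtilde, fderiv ℝ (gradient f) xB (x - xtilde)⟫) +
          12 * ρ * (f xB - f xstar) ^ ((3 : ℝ) / 2) / M ^ ((3 : ℝ) / 2) := by
  intro x hx
  have hD0 : 0 ≤ f xB - f xstar := sub_nonneg.2 (hmin xB)
  set t := √((f xB - f xstar) / M)
  have hD : M * t ^ 2 = f xB - f xstar := by
    rw [Real.sq_sqrt (div_nonneg hD0 hM.le)]
    field_simp
  have hLipOp : ∀ y y', ‖fderiv ℝ (gradient f) y - fderiv ℝ (gradient f) y'‖ ≤ ρ * ‖y - y'‖ :=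
    fun y y' => (opNorm_le_frobNorm _).trans (hLip y y')
  have hx_upper := (abs_le.1 (abs_sub_newton_model_le hf hLipOp hxt x)).2
  have hxstar_lower := (abs_le.1 (abs_sub_newton_model_le hf hLipOp hxt xstar)).1
  rw [norm_sub_rev] at hxstar_lower
  have hcubic := mul_pow_three_le_of_le_add (Q := ‖x - xtilde‖) (r := ‖xB - xtilde‖) (t := t)
    hM hρ (norm_nonneg _) (norm_nonneg _) (Real.sqrt_nonneg _) (norm_nonneg _)
    ((le_div_iff₀' hρ).1 hx)
    ((norm_sub_le_norm_sub_add_norm_sub x xtilde xB).trans_eq (by rw [norm_sub_rev xtilde]))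
    ((norm_sub_le_norm_sub_add_norm_sub xB x xtilde).trans_eq (by rw [norm_sub_rev xB, add_comm]))
    ((mul_sq_norm_newton_step_le hf hLipOp hsc hmin hxt).trans_eq (by rw [← hD]; ring))
  have hs := pow_three_le_of_half_mul_sq_le (t := t) hM (norm_nonneg _) (Real.sqrt_nonneg _)
    ((half_mul_norm_sub_sq_le_sub_of_forall_le hf hsc hmin xB).trans_eq hD.symm)
  rw [mul_div_assoc, rpow_three_halves_div_rpow_three_halves hD0 hM.le]
  linarith [hsc xB (x - xtilde), hsc xB (xstar - xtilde), mul_le_mul_of_nonneg_left hs hρ.le,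
    mul_nonneg hρ.le (pow_nonneg (Real.sqrt_nonneg _ : 0 ≤ t) 3),
    mul_nonneg hM.le (sq_nonneg ‖xstar - xtilde‖)]
end
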